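/- arXiv:2509.08599 — 10 statements merged into one kernel-verified Lean document; each statement's English description precedes it below -/
import Mathlib

section
/- Let k ≥ 2 and let a_1, a_2, …, a_k be positive integers with gcd(a_1, a_2, …, a_k) = 1. Then there exists a nonnegative integer N such that every integer n > N can be written as n = a_1·x_1 + a_2·x_2 + … + a_k·x_k with x_1, …, x_k nonnegative integers satisfying gcd(x_1, x_2, …, x_k) = 1. -/
open Finset

namespace FrobAux

def good (P : Finset ℕ) (f : ℕ → ℕ) (W : ℕ) : Finset ℕ :=
  (Finset.range W).filter fun t => ∀ p ∈ P, t % p ≠ f p % p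

lemma mem_good {P : Finset ℕ} {f : ℕ → ℕ} {W t : ℕ} :
    t ∈ good P f W ↔ t < W ∧ ∀ p ∈ P, t % p ≠ f p % p := by
  simp [good]

lemma mod_eq_iff_cast (a b p : ℕ) : a % p = b % p ↔ (a : ZMod p) = (b : ZMod p) := by
  rw [ZMod.natCast_eq_natCast_iff]; rfl

lemma count_bound (P : Finset ℕ) (f : ℕ → ℕ) (W : ℕ) (hP : ∀ p ∈ P, p.Prime) :
    |((good P f W).card : ℚ) - W * ∏ p ∈ P, (1 - 1/(p:ℚ))| ≤ 3 ^ P.card := by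
  classical
  induction P using Finset.induction_on generalizing f W with
  | empty =>
      simp [good]
  | @insert q P hqP ih =>
      have hq : q.Prime := hP q (mem_insert_self _ _)
      have hP' : ∀ p ∈ P, p.Prime := fun p hp => hP p (mem_insert_of_mem hp)
      have hq0 : 0 < q := hq.pos
      set c := f q % q with hcdef
      have hcq : c < q := Nat.mod_lt _ hq0
      -- the transformed residue function
      set f' : ℕ → ℕ := fun p => (((f p : ZMod p) - (c : ZMod p)) * (q : ZMod p)⁻¹).val
        with hf'
      set W' : ℕ := (W - c + (q - 1)) / q with hW'
      -- window characterization
      have hwin : ∀ u : ℕ, u < W' ↔ c + q * u < W := by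
        intro u
        rw [hW', Nat.lt_iff_add_one_le, Nat.le_div_iff_mul_le hq0]
        have := hq0
        have h1 : (u + 1) * q = q * u + q := by ring
        omega
      -- residue condition transfer
      have htrans : ∀ p ∈ P, ∀ u : ℕ,
          ((c + q * u) % p = f p % p ↔ u % p = f' p % p) := by
        intro p hp u
        have hpp := hP' p hp
        haveI : NeZero p := ⟨hpp.pos.ne'⟩
        have hpq : p ≠ q := by rintro rfl; exact hqP hp
        have hcop : Nat.Coprime q p := (Nat.coprime_primes hq hpp).mpr (Ne.symm hpq)
        have hunit : (q : ZMod p) * (q : ZMod p)⁻¹ = 1 := ZMod.coe_mul_inv_eq_one q hcop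
        rw [mod_eq_iff_cast, mod_eq_iff_cast]
        have hval : ((f' p : ℕ) : ZMod p)
            = ((f p : ZMod p) - (c : ZMod p)) * (q : ZMod p)⁻¹ := by
          rw [hf']
          exact ZMod.natCast_rightInverse _
        push_cast
        rw [hval]
        constructor
        · intro h
          have : (q : ZMod p) * u = (f p : ZMod p) - c := by
            rw [← h]; ring
          calc (u : ZMod p) = (q * (q : ZMod p)⁻¹) * u := by rw [hunit, one_mul]
            _ = ((q : ZMod p) * u) * (q : ZMod p)⁻¹ := by ring
            _ = ((f p : ZMod p) - c) * (q : ZMod p)⁻¹ := by rw [this]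
        · intro h
          have : (q : ZMod p) * u = (f p : ZMod p) - c := by
            rw [h]
            calc (q : ZMod p) * (((f p : ZMod p) - c) * (q : ZMod p)⁻¹)
                = (q * (q : ZMod p)⁻¹) * ((f p : ZMod p) - c) := by ring
              _ = (f p : ZMod p) - c := by rw [hunit, one_mul]
          rw [this]; ring
      -- splitting the count
      have hsplit : (good (insert q P) f W).card
          + ((good P f W).filter (fun t => t % q = f q % q)).card
          = (good P f W).card := by
        have e : good (insert q P) f W = (good P f W).filter (fun t => ¬ t % q = f q % q) := by
          ext t
          simp only [good, mem_filter, mem_range, Finset.forall_mem_insert]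
          tauto
        rw [e]
        rw [add_comm]
        exact Finset.card_filter_add_card_filter_not _
      -- bijection for the filtered part
      have hbij : ((good P f W).filter (fun t => t % q = f q % q)).card
          = (good P f' W').card := by
        refine Finset.card_bij' (fun t _ => (t - c) / q) (fun u _ => c + q * u) ?_ ?_ ?_ ?_
        · intro t ht
          rw [mem_filter, mem_good] at ht
          obtain ⟨⟨htW, hgood⟩, hmod⟩ := ht
          have h1 : t % q = c := by rw [hmod, hcdef]
          have hct : c ≤ t := by
            have := Nat.mod_le t q
            omega
          have hdvd : q ∣ t - c := by
            have h2 : c ≡ t [MOD q] := by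
              unfold Nat.ModEq
              rw [Nat.mod_eq_of_lt hcq, h1]
            exact (Nat.modEq_iff_dvd' hct).mp h2
          obtain ⟨u, hu⟩ := hdvd
          have htu : t = c + q * u := by omega
          have hu' : (t - c) / q = u := by
            rw [hu]; exact Nat.mul_div_cancel_left u hq0
          show (t - c) / q ∈ good P f' W'
          rw [hu', mem_good]
          constructor
          · rw [hwin, ← htu]; exact htW
          · intro p hp hcon
            apply hgood p hp
            rw [htu]
            exact (htrans p hp u).mpr hcon
        · intro u hu
          rw [mem_good] at hu
          obtain ⟨huW, hgood⟩ := hu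
          show c + q * u ∈ (good P f W).filter (fun t => t % q = f q % q)
          rw [mem_filter, mem_good]
          refine ⟨⟨(hwin u).mp huW, ?_⟩, ?_⟩
          · intro p hp hcon
            exact hgood p hp ((htrans p hp u).mp hcon)
          · rw [← hcdef, Nat.add_mul_mod_self_left, Nat.mod_eq_of_lt hcq]
        · intro t ht
          rw [mem_filter, mem_good] at ht
          obtain ⟨⟨htW, hgood⟩, hmod⟩ := ht
          have h1 : t % q = c := by rw [hmod, hcdef]
          have hct : c ≤ t := by
            have := Nat.mod_le t q
            omega
          have hdvd : q ∣ t - c := by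
            have h2 : c ≡ t [MOD q] := by
              unfold Nat.ModEq
              rw [Nat.mod_eq_of_lt hcq, h1]
            exact (Nat.modEq_iff_dvd' hct).mp h2
          obtain ⟨u, hu⟩ := hdvd
          have h3 : (t - c) / q = u := by rw [hu]; exact Nat.mul_div_cancel_left u hq0
          show c + q * ((t - c) / q) = t
          rw [h3]; omega
        · intro u hu
          show (c + q * u - c) / q = u
          have h1 : c + q * u - c = q * u := by omega
          rw [h1]
          exact Nat.mul_div_cancel_left u hq0
      -- window estimate over ℚ
      have hWin1 : q * W' ≤ W + q := by
        have h1 : q * W' ≤ W - c + (q - 1) := by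
          rw [hW', mul_comm]
          exact Nat.div_mul_le_self _ _
        omega
      have hWin2 : W ≤ q * W' + q := by
        have h1 : W - c + (q - 1) < q * (W' + 1) := by
          rw [hW']
          exact Nat.lt_mul_div_succ _ hq0
        have h2 : q * (W' + 1) = q * W' + q := by ring
        omega
      have hWq : |(W' : ℚ) - W / q| ≤ 1 := by
        have hq0' : (0 : ℚ) < q := by exact_mod_cast hq0
        have hc1 : (q : ℚ) * W' ≤ W + q := by exact_mod_cast hWin1
        have hc2 : (W : ℚ) ≤ q * W' + q := by exact_mod_cast hWin2
        rw [abs_le]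
        constructor
        · have h3 : (W : ℚ) / q ≤ W' + 1 := by
            rw [div_le_iff₀ hq0']
            nlinarith
          linarith
        · have h3 : (W' : ℚ) ≤ (W + q) / q := by
            rw [le_div_iff₀ hq0']
            nlinarith
          have h4 : ((W : ℚ) + q) / q = W / q + 1 := by field_simp
          linarith
      -- assemble
      have ihA := ih f W hP'
      have ihB := ih f' W' hP'
      set A := ((good P f W).card : ℚ) with hA
      set B := ((good P f' W').card : ℚ) with hB
      set π := ∏ p ∈ P, (1 - 1/(p:ℚ)) with hπ
      have hπ0 : 0 ≤ π := by
        apply Finset.prod_nonneg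
        intro p hp
        have h2 : (2 : ℚ) ≤ p := by exact_mod_cast (hP' p hp).two_le
        have : (0:ℚ) < p := by linarith
        rw [sub_nonneg, div_le_one this]
        linarith
      have hπ1 : π ≤ 1 := by
        apply Finset.prod_le_one
        · intro p hp
          have h2 : (2 : ℚ) ≤ p := by exact_mod_cast (hP' p hp).two_le
          have : (0:ℚ) < p := by linarith
          rw [sub_nonneg, div_le_one this]
          linarith
        · intro p hp
          have h2 : (2 : ℚ) ≤ p := by exact_mod_cast (hP' p hp).two_le
          have hpos : (0:ℚ) < p := by linarith
          have : 1/(p:ℚ) ≥ 0 := by positivity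
          linarith
      have hcard : ((good (insert q P) f W).card : ℚ) = A - B := by
        rw [hA, hB, ← hbij]
        have := hsplit
        push_cast [← this]
        ring
      rw [hcard, Finset.prod_insert hqP, Finset.card_insert_of_notMem hqP]
      have hq0' : (0 : ℚ) < q := by exact_mod_cast hq0
      have e : A - B - (W : ℚ) * ((1 - 1/q) * π)
          = (A - W * π) - (B - W' * π) - ((W' : ℚ) - W / q) * π := by
        field_simp
        ring
      calc |A - B - (W : ℚ) * ((1 - 1/q) * π)|
          = |(A - W * π) - (B - W' * π) - ((W' : ℚ) - W / q) * π| := by rw [e]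
        _ ≤ |(A - W * π) - (B - W' * π)| + |((W' : ℚ) - W / q) * π| := by
            apply abs_sub
        _ ≤ (|A - W * π| + |B - W' * π|) + |((W' : ℚ) - W / q) * π| := by
            gcongr
            apply abs_sub
        _ ≤ (3 ^ P.card + 3 ^ P.card) + 1 := by
            have habs1 : |((W' : ℚ) - W / q) * π| ≤ 1 := by
              rw [abs_mul]
              have h1 : |π| ≤ 1 := by rw [abs_of_nonneg hπ0]; exact hπ1
              calc |(W' : ℚ) - W / q| * |π| ≤ 1 * 1 :=
                    mul_le_mul hWq h1 (abs_nonneg _) zero_le_one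
                _ = 1 := by ring
            exact add_le_add (add_le_add ihA ihB) habs1
        _ ≤ 3 ^ (P.card + 1) := by
            have h1 : (1 : ℚ) ≤ 3 ^ P.card := one_le_pow₀ (by norm_num)
            rw [pow_succ]
            linarith

lemma cube_bound (P : Finset ℕ) (hP : ∀ p ∈ P, p.Prime) :
    27 ^ P.card * ∏ p ∈ P, p ≤ 1782 * ∏ p ∈ P, (p - 1) ^ 3 := by
  classical
  set c : ℕ → ℕ := fun p => if p = 2 then 54 else if p = 3 then 11 else if p = 5 then 3 else 1
    with hc
  have h1 : ∀ p ∈ P, 27 * p ≤ c p * (p - 1) ^ 3 := by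
    intro p hp
    have hpp := hP p hp
    by_cases h2 : p = 2
    · subst h2; simp [hc]
    by_cases h3 : p = 3
    · subst h3; simp [hc]
    by_cases h5 : p = 5
    · subst h5; simp [hc]
    have hne4 : p ≠ 4 := by rintro rfl; exact absurd hpp (by decide)
    have hne6 : p ≠ 6 := by rintro rfl; exact absurd hpp (by decide)
    have h7 : 7 ≤ p := by have := hpp.two_le; omega
    have hcp : c p = 1 := by simp [hc, h2, h3, h5]
    rw [hcp, one_mul]
    obtain ⟨m, rfl⟩ : ∃ m, p = m + 1 := ⟨p - 1, by omega⟩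
    have hm : 6 ≤ m := by omega
    simp only [Nat.add_sub_cancel]
    have h1 : 36 ≤ m * m := Nat.mul_le_mul hm hm
    have h2 : 36 * m ≤ m * m * m := Nat.mul_le_mul_right m h1
    have h3 : m ^ 3 = m * m * m := by ring
    omega
  have e1 : 27 ^ P.card * ∏ p ∈ P, p = ∏ p ∈ P, (27 * p) := by
    rw [Finset.prod_mul_distrib, Finset.prod_const]
  have e2 : ∏ p ∈ P, (27 * p) ≤ ∏ p ∈ P, (c p * (p - 1) ^ 3) :=
    Finset.prod_le_prod' h1
  have e3 : ∏ p ∈ P, (c p * (p - 1) ^ 3) = (∏ p ∈ P, c p) * ∏ p ∈ P, (p - 1) ^ 3 :=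
    Finset.prod_mul_distrib
  have e4 : ∏ p ∈ P, c p ≤ 1782 := by
    have key : ∏ p ∈ P, c p = ∏ p ∈ P.filter (· ∈ ({2, 3, 5} : Finset ℕ)), c p := by
      refine (Finset.prod_subset (Finset.filter_subset _ _) ?_).symm
      intro x hx hnx
      simp only [Finset.mem_filter, hx, true_and] at hnx
      have : x ≠ 2 ∧ x ≠ 3 ∧ x ≠ 5 := by
        constructor
        · rintro rfl; exact hnx (by decide)
        constructor
        · rintro rfl; exact hnx (by decide)
        · rintro rfl; exact hnx (by decide)
      simp [hc, this.1, this.2.1, this.2.2]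
    rw [key]
    calc ∏ p ∈ P.filter (· ∈ ({2, 3, 5} : Finset ℕ)), c p
        ≤ ∏ p ∈ ({2, 3, 5} : Finset ℕ), c p := by
          apply Finset.prod_le_prod_of_subset_of_one_le'
          · intro x hx
            exact (Finset.mem_filter.mp hx).2
          · intro x _ _
            simp only [hc]
            split <;> try split <;> try split
            all_goals omega
      _ = 1782 := by decide
  calc 27 ^ P.card * ∏ p ∈ P, p = ∏ p ∈ P, (27 * p) := e1
    _ ≤ (∏ p ∈ P, c p) * ∏ p ∈ P, (p - 1) ^ 3 := by rw [← e3]; exact e2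
    _ ≤ 1782 * ∏ p ∈ P, (p - 1) ^ 3 := Nat.mul_le_mul_right _ e4

lemma sieve (C : ℕ) (hC : 0 < C) {n : ℕ} (hn : 14256 * C ^ 3 < n) (f : ℕ → ℕ) :
    ∃ t, t ≤ n / C ∧ ∀ p ∈ n.primeFactors, t % p ≠ f p % p := by
  have hn0 : 0 < n := lt_of_le_of_lt (Nat.zero_le _) hn
  set P := n.primeFactors with hPdef
  have hP : ∀ p ∈ P, p.Prime := fun p hp => Nat.prime_of_mem_primeFactors hp
  set W := n / C + 1 with hWdef
  set r := ∏ p ∈ P, p with hr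
  have hrdvd : r ∣ n := Nat.prod_primeFactors_dvd n
  have hrn : r ≤ n := Nat.le_of_dvd hn0 hrdvd
  have hr0 : 0 < r := Finset.prod_pos (fun p hp => (hP p hp).pos)
  set Φ := ∏ p ∈ P, (p - 1) with hΦ
  have hΦ0 : 0 < Φ := Finset.prod_pos (fun p hp => by have := (hP p hp).two_le; omega)
  -- step 1 : n < C * W
  have hCW : n < C * W := by
    have h1 : C * (n / C) + n % C = n := Nat.div_add_mod n C
    have h2 : n % C < C := Nat.mod_lt _ hC
    have h3 : C * W = C * (n / C) + C := by rw [hWdef]; ring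
    omega
  -- step 2 : 1782 * n^2 < W^3
  have hW3 : 1782 * n ^ 2 < W ^ 3 := by
    have h4 : n ^ 3 < C ^ 3 * W ^ 3 := by
      calc n ^ 3 < (C * W) ^ 3 := Nat.pow_lt_pow_left hCW (by norm_num)
        _ = C ^ 3 * W ^ 3 := by ring
    have h5 : C ^ 3 * (14256 * n ^ 2) < n ^ 3 := by
      have hn2 : 0 < n ^ 2 := by positivity
      calc C ^ 3 * (14256 * n ^ 2) = (14256 * C ^ 3) * n ^ 2 := by ring
        _ < n * n ^ 2 := (Nat.mul_lt_mul_right hn2).mpr hn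
        _ = n ^ 3 := by ring
    have h6 : C ^ 3 * (14256 * n ^ 2) < C ^ 3 * W ^ 3 := lt_trans h5 h4
    have h7 : 14256 * n ^ 2 < W ^ 3 := Nat.lt_of_mul_lt_mul_left h6
    have : 1782 * n ^ 2 ≤ 14256 * n ^ 2 := Nat.mul_le_mul_right _ (by norm_num)
    omega
  -- step 3 : cube comparison
  have hkey : 3 ^ P.card * r < W * Φ := by
    have hcube : (3 ^ P.card * r) ^ 3 < (W * Φ) ^ 3 := by
      have hc := cube_bound P hP
      have hΦ3 : ∏ p ∈ P, (p - 1) ^ 3 = Φ ^ 3 := by rw [hΦ, ← Finset.prod_pow]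
      rw [hΦ3] at hc
      have e1 : (3 ^ P.card * r) ^ 3 = (27 ^ P.card * r) * r ^ 2 := by
        have : (3 : ℕ) ^ P.card * (3 : ℕ) ^ P.card * (3:ℕ) ^ P.card = 27 ^ P.card := by
          rw [← pow_add, ← pow_add]
          have : P.card + P.card + P.card = 3 * P.card := by ring
          rw [this, pow_mul]
          norm_num
        calc (3 ^ P.card * r) ^ 3
            = (3 ^ P.card * 3 ^ P.card * 3 ^ P.card) * (r * r ^ 2) := by ring
          _ = 27 ^ P.card * (r * r ^ 2) := by rw [this]
          _ = (27 ^ P.card * r) * r ^ 2 := by ring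
      calc (3 ^ P.card * r) ^ 3 = (27 ^ P.card * r) * r ^ 2 := e1
        _ ≤ (1782 * Φ ^ 3) * r ^ 2 := Nat.mul_le_mul_right _ hc
        _ = Φ ^ 3 * (1782 * r ^ 2) := by ring
        _ ≤ Φ ^ 3 * (1782 * n ^ 2) := by
            have : r ^ 2 ≤ n ^ 2 := Nat.pow_le_pow_left hrn 2
            exact Nat.mul_le_mul_left _ (Nat.mul_le_mul_left _ this)
        _ < Φ ^ 3 * W ^ 3 := by
            have hΦ3pos : 0 < Φ ^ 3 := by positivity
            exact (Nat.mul_lt_mul_left hΦ3pos).mpr hW3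
        _ = (W * Φ) ^ 3 := by ring
    by_contra hcon
    push_neg at hcon
    have := Nat.pow_le_pow_left hcon 3
    omega
  -- step 4 : to ℚ and conclude
  have hr0' : (0 : ℚ) < r := by exact_mod_cast hr0
  have hπ : ∏ p ∈ P, (1 - 1/(p:ℚ)) = (Φ : ℚ) / (r : ℚ) := by
    have hfac : ∀ p ∈ P, (1 - 1/(p:ℚ)) = ((p - 1 : ℕ) : ℚ) / ((p : ℕ) : ℚ) := by
      intro p hp
      have h2 : 2 ≤ p := (hP p hp).two_le
      have hp0 : (0:ℚ) < (p:ℚ) := by exact_mod_cast (hP p hp).pos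
      rw [Nat.cast_sub (by omega : 1 ≤ p)]
      field_simp
      norm_num
    rw [Finset.prod_congr rfl hfac, Finset.prod_div_distrib, hΦ, hr]
    push_cast
    ring
  have hcount := count_bound P f W hP
  rw [hπ] at hcount
  have hposq : (3:ℚ) ^ P.card < (W : ℚ) * ((Φ : ℚ) / r) := by
    rw [mul_div_assoc'] at *
    rw [lt_div_iff₀ hr0']
    exact_mod_cast hkey
  have hcard0 : (good P f W).card ≠ 0 := by
    intro h0
    rw [h0] at hcount
    have hnn : (0:ℚ) ≤ (W : ℚ) * ((Φ : ℚ) / r) := by positivity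
    rw [Nat.cast_zero, zero_sub, abs_neg, abs_of_nonneg hnn] at hcount
    linarith
  obtain ⟨t, ht⟩ := Finset.card_pos.mp (Nat.pos_of_ne_zero hcard0)
  rw [mem_good] at ht
  exact ⟨t, by omega, ht.2⟩

lemma pair (a b : ℕ) (ha : 0 < a) (hb : 0 < b) (hab : Nat.Coprime a b) :
    ∃ N : ℕ, ∀ n : ℕ, n > N → ∃ X Y : ℕ, a * X + b * Y = n ∧ Nat.gcd X Y = 1 := by
  classical
  set C := 2 * (a * b) with hCdef
  have hC : 0 < C := by positivity
  refine ⟨14256 * C ^ 3 + C, fun n hn => ?_⟩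
  have hnC : 14256 * C ^ 3 < n := by omega
  have hn2ab : 2 * (a * b) ≤ n := by omega
  have hn0 : 0 < n := by omega
  haveI : NeZero b := ⟨hb.ne'⟩
  set c := ((n : ZMod b) * (a : ZMod b)⁻¹).val with hcdef
  have hcb : c < b := ZMod.val_lt _
  have hmod : a * c ≡ n [MOD b] := by
    have hcz : ((c : ℕ) : ZMod b) = (n : ZMod b) * (a : ZMod b)⁻¹ :=
      ZMod.natCast_rightInverse _
    have hunit : (a : ZMod b) * (a : ZMod b)⁻¹ = 1 := ZMod.coe_mul_inv_eq_one a hab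
    have h1 : ((a * c : ℕ) : ZMod b) = ((n : ℕ) : ZMod b) := by
      push_cast
      rw [hcz]
      calc (a : ZMod b) * ((n : ZMod b) * (a : ZMod b)⁻¹)
          = ((a : ZMod b) * (a : ZMod b)⁻¹) * n := by ring
        _ = (n : ZMod b) := by rw [hunit, one_mul]
    exact (ZMod.natCast_eq_natCast_iff _ _ _).mp h1
  have hacab : a * c ≤ a * b := Nat.mul_le_mul_left a (le_of_lt hcb)
  have hacn : a * c ≤ n := by omega
  have hdvd : b ∣ n - a * c := (Nat.modEq_iff_dvd' hacn).mp hmod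
  set Y0 := (n - a * c) / b with hY0def
  have hbY0 : b * Y0 = n - a * c := Nat.mul_div_cancel' hdvd
  -- residue classes to avoid
  set f : ℕ → ℕ := fun p =>
    if p ∣ b then ((Y0 : ZMod p) * (a : ZMod p)⁻¹).val
    else ((-(c : ZMod p)) * (b : ZMod p)⁻¹).val with hf
  obtain ⟨t, htC, hgood⟩ := sieve C hC hnC f
  set X := c + b * t with hXdef
  set Y := Y0 - a * t with hYdef
  -- a * t ≤ Y0
  have hatY0 : a * t ≤ Y0 := by
    have h1 : a * b * t ≤ a * b * (n / C) := Nat.mul_le_mul_left _ htC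
    have h2 : 2 * (a * b * (n / C)) = C * (n / C) := by rw [hCdef]; ring
    have h3 : C * (n / C) ≤ n := by
      rw [mul_comm]
      exact Nat.div_mul_le_self n C
    have h10 : 2 * (a * b * t) ≤ n := by
      calc 2 * (a * b * t) ≤ 2 * (a * b * (n / C)) := by omega
        _ = C * (n / C) := h2
        _ ≤ n := h3
    have h11 : 2 * (a * c) ≤ n := by omega
    have h4 : b * (a * t) ≤ b * Y0 := by
      have e8 : b * (a * t) = a * b * t := by ring
      rw [e8, hbY0, Nat.le_sub_iff_add_le hacn]
      omega
    exact Nat.le_of_mul_le_mul_left h4 hb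
  have e5 : Y + a * t = Y0 := by omega
  have hsum : a * X + b * Y = n := by
    have e1 : a * X = a * c + a * (b * t) := by rw [hXdef]; ring
    have e6 : b * (Y + a * t) = b * Y0 := by rw [e5]
    have e7 : b * (Y + a * t) = b * Y + b * (a * t) := by ring
    have e8 : a * (b * t) = b * (a * t) := by ring
    omega
  refine ⟨X, Y, hsum, ?_⟩
  by_contra hne
  obtain ⟨p, hp, hpdvd⟩ := Nat.exists_prime_and_dvd hne
  have hpX : p ∣ X := hpdvd.trans (Nat.gcd_dvd_left _ _)
  have hpY : p ∣ Y := hpdvd.trans (Nat.gcd_dvd_right _ _)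
  have hpn : p ∣ n := by
    rw [← hsum]
    exact Nat.dvd_add (Dvd.dvd.mul_left hpX a) (Dvd.dvd.mul_left hpY b)
  have hpmem : p ∈ n.primeFactors := Nat.mem_primeFactors.mpr ⟨hp, hpn, hn0.ne'⟩
  apply hgood p hpmem
  haveI : NeZero p := ⟨hp.pos.ne'⟩
  rw [mod_eq_iff_cast]
  by_cases hpb : p ∣ b
  · have hpa : ¬ p ∣ a := by
      intro hpa
      have h1 : p ∣ Nat.gcd a b := Nat.dvd_gcd hpa hpb
      rw [hab] at h1
      exact hp.ne_one (Nat.dvd_one.mp h1)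
    have hcopa : Nat.Coprime a p := ((Nat.Prime.coprime_iff_not_dvd hp).mpr hpa).symm
    have hunit : (a : ZMod p) * (a : ZMod p)⁻¹ = 1 := ZMod.coe_mul_inv_eq_one a hcopa
    have h0 : ((Y : ℕ) : ZMod p) = 0 := (ZMod.natCast_eq_zero_iff _ _).mpr hpY
    have h1 : (a : ZMod p) * (t : ZMod p) = (Y0 : ZMod p) := by
      have h2 := congrArg (fun m : ℕ => (m : ZMod p)) e5
      push_cast at h2
      rw [h0, zero_add] at h2
      exact h2
    have hfp : ((f p : ℕ) : ZMod p) = (Y0 : ZMod p) * (a : ZMod p)⁻¹ := by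
      rw [hf]
      simp only [if_pos hpb]
      exact ZMod.natCast_rightInverse _
    rw [hfp]
    calc (t : ZMod p) = ((a : ZMod p) * (a : ZMod p)⁻¹) * t := by rw [hunit, one_mul]
      _ = ((a : ZMod p) * t) * (a : ZMod p)⁻¹ := by ring
      _ = (Y0 : ZMod p) * (a : ZMod p)⁻¹ := by rw [h1]
  · have hcopb : Nat.Coprime b p := ((Nat.Prime.coprime_iff_not_dvd hp).mpr hpb).symm
    have hunit : (b : ZMod p) * (b : ZMod p)⁻¹ = 1 := ZMod.coe_mul_inv_eq_one b hcopb
    have h0 : ((X : ℕ) : ZMod p) = 0 := (ZMod.natCast_eq_zero_iff _ _).mpr hpX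
    have h1 : (b : ZMod p) * (t : ZMod p) = -(c : ZMod p) := by
      have h2 := congrArg (fun m : ℕ => (m : ZMod p)) hXdef
      push_cast at h2
      rw [h0] at h2
      linear_combination -h2
    have hfp : ((f p : ℕ) : ZMod p) = (-(c : ZMod p)) * (b : ZMod p)⁻¹ := by
      rw [hf]
      simp only [if_neg hpb]
      exact ZMod.natCast_rightInverse _
    rw [hfp]
    calc (t : ZMod p) = ((b : ZMod p) * (b : ZMod p)⁻¹) * t := by rw [hunit, one_mul]
      _ = ((b : ZMod p) * t) * (b : ZMod p)⁻¹ := by ring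
      _ = (-(c : ZMod p)) * (b : ZMod p)⁻¹ := by rw [h1]

lemma exists_residue (a b n : ℕ) (hb : 0 < b) (hab : Nat.Coprime a b) :
    ∃ c, c < b ∧ a * c ≡ n [MOD b] := by
  haveI : NeZero b := ⟨hb.ne'⟩
  refine ⟨((n : ZMod b) * (a : ZMod b)⁻¹).val, ZMod.val_lt _, ?_⟩
  have hcz : ((((n : ZMod b) * (a : ZMod b)⁻¹).val : ℕ) : ZMod b)
      = (n : ZMod b) * (a : ZMod b)⁻¹ := ZMod.natCast_rightInverse _
  have hunit : (a : ZMod b) * (a : ZMod b)⁻¹ = 1 := ZMod.coe_mul_inv_eq_one a hab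
  apply (ZMod.natCast_eq_natCast_iff _ _ _).mp
  push_cast
  rw [hcz]
  calc (a : ZMod b) * ((n : ZMod b) * (a : ZMod b)⁻¹)
      = ((a : ZMod b) * (a : ZMod b)⁻¹) * n := by ring
    _ = (n : ZMod b) := by rw [hunit, one_mul]

lemma aux : ∀ k : ℕ, 2 ≤ k → ∀ a : Fin k → ℕ, (∀ i, 0 < a i) → Finset.univ.gcd a = 1 →
    ∃ N : ℕ, ∀ n : ℕ, n > N →
      ∃ x : Fin k → ℕ, (∑ i, a i * x i) = n ∧ Finset.univ.gcd x = 1 := by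
  intro k hk
  induction k, hk using Nat.le_induction with
  | base =>
      intro a ha hgcd
      have huniv : (Finset.univ : Finset (Fin 2)) = {0, 1} := by decide
      have hg : Finset.univ.gcd a = Nat.gcd (a 0) (a 1) := by
        rw [huniv]
        simp only [Finset.gcd_insert, Finset.gcd_singleton]
        rw [normalize_eq]
        rfl
      rw [hg] at hgcd
      obtain ⟨N, hN⟩ := pair (a 0) (a 1) (ha 0) (ha 1) hgcd
      refine ⟨N, fun n hn => ?_⟩
      obtain ⟨X, Y, hXY, hg1⟩ := hN n hn
      refine ⟨![X, Y], ?_, ?_⟩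
      · rw [Fin.sum_univ_two]
        simpa using hXY
      · have : Finset.univ.gcd ![X, Y] = Nat.gcd X Y := by
          rw [huniv]
          simp only [Finset.gcd_insert, Finset.gcd_singleton]
          rw [normalize_eq]
          simp only [Matrix.cons_val_zero, Matrix.cons_val_one, Matrix.head_cons]
          rfl
        rw [this]
        exact hg1
  | succ k hk ih =>
      intro a ha hgcd
      set b := Finset.univ.gcd (fun i : Fin k => a i.succ) with hbdef
      have hbdvd : ∀ i : Fin k, b ∣ a i.succ := fun i => Finset.gcd_dvd (mem_univ i)
      have hb : 0 < b := by
        rcases Nat.eq_zero_or_pos b with h0 | h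
        · exfalso
          have i0 : Fin k := ⟨0, by omega⟩
          have := hbdvd i0
          rw [h0] at this
          have := Nat.eq_zero_of_zero_dvd this
          exact (ha i0.succ).ne' this
        · exact h
      have hcop : Nat.Coprime (a 0) b := by
        have hdvd1 : Nat.gcd (a 0) b ∣ Finset.univ.gcd a := by
          apply Finset.dvd_gcd
          intro i _
          refine Fin.cases ?_ ?_ i
          · exact Nat.gcd_dvd_left _ _
          · intro j
            exact (Nat.gcd_dvd_right _ _).trans (hbdvd j)
        rw [hgcd] at hdvd1
        exact Nat.dvd_one.mp hdvd1
      set a' : Fin k → ℕ := fun i => a i.succ / b with ha'def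
      have ha'pos : ∀ i, 0 < a' i :=
        fun i => Nat.div_pos (Nat.le_of_dvd (ha _) (hbdvd i)) hb
      have hmul : ∀ i, b * a' i = a i.succ := fun i => Nat.mul_div_cancel' (hbdvd i)
      have hgcd' : Finset.univ.gcd a' = 1 := by
        have h2 : ∀ i : Fin k, b * Finset.univ.gcd a' ∣ a i.succ := fun i => by
          rw [← hmul i]
          exact mul_dvd_mul_left b (Finset.gcd_dvd (mem_univ i))
        have h3 : b * Finset.univ.gcd a' ∣ b := by
          have h4 : b * Finset.univ.gcd a' ∣ Finset.univ.gcd (fun i : Fin k => a i.succ) :=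
            Finset.dvd_gcd fun i _ => h2 i
          rw [← hbdef] at h4
          exact h4
        have h5 : b * Finset.univ.gcd a' ∣ b * 1 := by rwa [mul_one]
        exact Nat.dvd_one.mp ((mul_dvd_mul_iff_left hb.ne').mp h5)
      obtain ⟨N', hN'⟩ := ih a' ha'pos hgcd'
      refine ⟨a 0 * b + b * N' + b, fun n hn => ?_⟩
      obtain ⟨c, hcb, hmod⟩ := exists_residue (a 0) b n hb hcop
      have hacb : a 0 * c ≤ a 0 * b := Nat.mul_le_mul_left _ (le_of_lt hcb)
      have hacn : a 0 * c ≤ n := by omega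
      have hdvd : b ∣ n - a 0 * c := (Nat.modEq_iff_dvd' hacn).mp hmod
      set Y := (n - a 0 * c) / b with hYdef
      have hbY : b * Y = n - a 0 * c := Nat.mul_div_cancel' hdvd
      have hYN' : Y > N' := by
        have hlt : b * N' < b * Y := by omega
        exact Nat.lt_of_mul_lt_mul_left hlt
      obtain ⟨y, hysum, hygcd⟩ := hN' Y hYN'
      refine ⟨Fin.cases c y, ?_, ?_⟩
      · rw [Fin.sum_univ_succ]
        simp only [Fin.cases_zero, Fin.cases_succ]
        have h6 : ∑ i : Fin k, a i.succ * y i = b * Y := by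
          calc ∑ i : Fin k, a i.succ * y i = ∑ i : Fin k, b * (a' i * y i) :=
                Finset.sum_congr rfl (fun i _ => by rw [← hmul i]; ring)
            _ = b * ∑ i : Fin k, a' i * y i := by rw [Finset.mul_sum]
            _ = b * Y := by rw [hysum]
        rw [h6]
        omega
      · have hg : Finset.univ.gcd (Fin.cases c y : Fin (k+1) → ℕ) ∣ Finset.univ.gcd y := by
          apply Finset.dvd_gcd
          intro j _
          have h7 := Finset.gcd_dvd (Finset.mem_univ (Fin.succ j))
            (f := (Fin.cases c y : Fin (k+1) → ℕ))
          simpa using h7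
        rw [hygcd] at hg
        exact Nat.dvd_one.mp hg

end FrobAux

/-- Let `k ≥ 2` and let `a 0, …, a (k-1)` be positive integers with
`gcd (a 0, …, a (k-1)) = 1`. Then there exists a nonnegative integer `N` such that every
integer `n > N` can be written as `n = ∑ i, a i * x i` with the `x i` nonnegative integers
satisfying `gcd (x 0, …, x (k-1)) = 1`. -/
theorem frobenius_coprime_representation (k : ℕ) (hk : 2 ≤ k) (a : Fin k → ℕ)
    (ha : ∀ i, 0 < a i) (hgcd : Finset.univ.gcd a = 1) :
    ∃ N : ℕ, ∀ n : ℕ, n > N →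
      ∃ x : Fin k → ℕ, (∑ i, a i * x i) = n ∧ Finset.univ.gcd x = 1 := by
  exact FrobAux.aux k hk a ha hgcd
end

section
/- Let 1 < a_1 < a_2 be integers with gcd(a_1, a_2) = 1, and let n be a positive integer. Then g(n) = ⌊(n − a_2·r_n)/(a_1·a_2)⌋ + 1, where the floor is taken of the (possibly negative) rational number (n − a_2·r_n)/(a_1·a_2). -/
/-- Let `1 < a₁ < a₂` be coprime integers and `n` a positive integer.
If `r` is the unique integer with `0 ≤ r < a₁` and `a₂ * r ≡ n (mod a₁)`, then the number of
pairs `(x₁, x₂)` of nonnegative integers with `a₁x₁ + a₂x₂ = n` equals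
`⌊(n − a₂r)/(a₁a₂)⌋ + 1`, the floor being that of a (possibly negative) rational number. -/
theorem count_representations_closed_form (a₁ a₂ : ℕ) (h₁ : 1 < a₁) (h₂ : a₁ < a₂)
    (hco : Nat.gcd a₁ a₂ = 1) (n : ℕ) (hn : 0 < n)
    (r : ℕ) (hr : r < a₁) (hmod : (a₂ * r) % a₁ = n % a₁) :
    (Nat.card {x : ℕ × ℕ // a₁ * x.1 + a₂ * x.2 = n} : ℤ)
      = ⌊((n : ℚ) - a₂ * r) / (a₁ * a₂)⌋ + 1 := by
  have ha₁ : 0 < a₁ := by omega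
  have ha₂ : 0 < a₂ := by omega
  -- rewrite the floor argument as an integer divided by a natural number
  have hcast : ((n : ℚ) - a₂ * r) / (a₁ * a₂)
      = (((n : ℤ) - a₂ * r : ℤ) : ℚ) / ((a₁ * a₂ : ℕ) : ℚ) := by
    push_cast
    ring
  rw [hcast, Rat.floor_intCast_div_natCast]
  -- key: for any solution, x₂ % a₁ = r
  have key : ∀ x₁ x₂ : ℕ, a₁ * x₁ + a₂ * x₂ = n → x₂ % a₁ = r := by
    intro x₁ x₂ hx
    have h1 : a₂ * x₂ ≡ a₂ * r [MOD a₁] := by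
      show (a₂ * x₂) % a₁ = (a₂ * r) % a₁
      rw [hmod, ← hx, Nat.mul_add_mod]
    have h2 : x₂ ≡ r [MOD a₁] :=
      Nat.ModEq.cancel_left_of_coprime hco h1
    calc x₂ % a₁ = r % a₁ := h2
      _ = r := Nat.mod_eq_of_lt hr
  rcases le_or_gt (a₂ * r) n with hle | hlt
  · -- there is at least one solution
    set N : ℕ := (n - a₂ * r) / (a₁ * a₂) with hN
    have key2 : ∀ x₁ x₂ : ℕ, a₁ * x₁ + a₂ * x₂ = n →
        x₂ = r + a₁ * ((x₂ - r) / a₁) ∧ (x₂ - r) / a₁ ≤ N := by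
      intro x₁ x₂ hx
      have hm := key x₁ x₂ hx
      have hq : x₂ = a₁ * (x₂ / a₁) + r := by
        conv_lhs => rw [← Nat.div_add_mod x₂ a₁, hm]
      have ht : (x₂ - r) / a₁ = x₂ / a₁ := by
        rw [show x₂ - r = a₁ * (x₂ / a₁) by omega, Nat.mul_div_cancel_left _ ha₁]
      constructor
      · rw [ht]; omega
      · rw [ht, Nat.le_div_iff_mul_le (by positivity)]
        have hxle : a₂ * x₂ ≤ n := by omega
        have : a₂ * (a₁ * (x₂ / a₁) + r) ≤ n := by rw [← hq]; exact hxle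
        have h3 : a₂ * r + (x₂ / a₁) * (a₁ * a₂) ≤ n := by nlinarith [this]
        omega
    have hNle : ∀ t : ℕ, t ≤ N → a₂ * (r + a₁ * t) ≤ n := by
      intro t hts
      have := Nat.le_div_iff_mul_le (k := a₁ * a₂) (by positivity) |>.mp
        (le_trans hts le_rfl)
      have h4 : t * (a₁ * a₂) ≤ n - a₂ * r := this
      have h5 : a₂ * (r + a₁ * t) = a₂ * r + t * (a₁ * a₂) := by ring
      omega
    have hdvd : ∀ t : ℕ, t ≤ N → a₁ ∣ n - a₂ * (r + a₁ * t) := by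
      intro t hts
      have hle2 := hNle t hts
      have hmodeq : a₂ * (r + a₁ * t) ≡ n [MOD a₁] := by
        show (a₂ * (r + a₁ * t)) % a₁ = n % a₁
        rw [← hmod, show a₂ * (r + a₁ * t) = a₂ * r + (t * a₂) * a₁ by ring,
          Nat.add_mul_mod_self_right]
      exact (Nat.modEq_iff_dvd' hle2).mp hmodeq
    have e : {x : ℕ × ℕ // a₁ * x.1 + a₂ * x.2 = n} ≃ Fin (N + 1) :=
      { toFun := fun x => ⟨(x.1.2 - r) / a₁, by
          have := key2 x.1.1 x.1.2 x.2
          omega⟩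
        invFun := fun t => ⟨((n - a₂ * (r + a₁ * t)) / a₁, r + a₁ * t), by
          have ht : (t : ℕ) ≤ N := by omega
          have h5 := hNle t ht
          have h6 := hdvd t ht
          show a₁ * ((n - a₂ * (r + a₁ * t)) / a₁) + a₂ * (r + a₁ * t) = n
          rw [Nat.mul_div_cancel' h6]
          omega⟩
        left_inv := fun x => by
          ext
          · show (n - a₂ * (r + a₁ * ((x.1.2 - r) / a₁))) / a₁ = x.1.1
            have h7 := (key2 x.1.1 x.1.2 x.2).1
            rw [← h7]
            have hx := x.2
            rw [show n - a₂ * x.1.2 = a₁ * x.1.1 by omega,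
              Nat.mul_div_cancel_left _ ha₁]
          · show r + a₁ * ((x.1.2 - r) / a₁) = x.1.2
            exact (key2 x.1.1 x.1.2 x.2).1.symm
        right_inv := fun t => by
          ext
          show (r + a₁ * t - r) / a₁ = t
          rw [Nat.add_sub_cancel_left, Nat.mul_div_cancel_left _ ha₁] }
    rw [Nat.card_congr e, Nat.card_eq_fintype_card, Fintype.card_fin]
    have : ((n : ℤ) - a₂ * r) = ((n - a₂ * r : ℕ) : ℤ) := by omega
    rw [this, ← Int.natCast_div]
    norm_cast
  · -- no solutions
    have hempty : IsEmpty {x : ℕ × ℕ // a₁ * x.1 + a₂ * x.2 = n} := by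
      constructor
      rintro ⟨⟨x₁, x₂⟩, hx⟩
      have hx' : a₁ * x₁ + a₂ * x₂ = n := hx
      have hm := key x₁ x₂ hx'
      have hrx : r ≤ x₂ := by
        have := Nat.mod_le x₂ a₁
        omega
      have : a₂ * r ≤ a₂ * x₂ := Nat.mul_le_mul_left _ hrx
      omega
    rw [Nat.card_of_isEmpty]
    have hk : (0 : ℤ) < (a₁ * a₂ : ℕ) := by positivity
    have hub : a₂ * r < a₁ * a₂ := by nlinarith
    have hlb : -((a₁ * a₂ : ℕ) : ℤ) < (n : ℤ) - a₂ * r := by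
      push_cast
      omega
    have hneg : (n : ℤ) - a₂ * r < 0 := by
      push_cast
      omega
    have : ((n : ℤ) - a₂ * r) / ((a₁ * a₂ : ℕ) : ℤ) = -1 := by
      set m : ℤ := (n : ℤ) - a₂ * r
      set k : ℤ := ((a₁ * a₂ : ℕ) : ℤ)
      rw [show m = (m + k) + (-1) * k by ring,
        Int.add_mul_ediv_right _ _ (by omega : k ≠ 0),
        Int.ediv_eq_zero_of_lt (by omega) (by omega)]
      norm_num
    omega
end

section
/- Let 1 < a_1 < a_2 be integers with gcd(a_1, a_2) = 1. Then for every positive integer n, f(n) = φ(n)/(a_1·a_2) + Σ_{d ∣ n} μ(n/d)·(1 − r_d/a_1 − {(d − a_2·r_d)/(a_1·a_2)}), where the sum runs over the positive divisors d of n. -/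
open Finset

/-- all nonneg solutions of `a₁ x₁ + a₂ x₂ = d`. -/
private def gsetP (a₁ a₂ d : ℕ) : Finset (ℕ × ℕ) :=
  ((Finset.range (d+1)) ×ˢ (Finset.range (d+1))).filter (fun x => a₁ * x.1 + a₂ * x.2 = d)

/-- coprime nonneg solutions. -/
private def fsetP (a₁ a₂ d : ℕ) : Finset (ℕ × ℕ) :=
  (gsetP a₁ a₂ d).filter (fun x => Nat.gcd x.1 x.2 = 1)

private lemma mem_gsetP {a₁ a₂ : ℕ} (h₁ : 0 < a₁) (h₂ : 0 < a₂) {d : ℕ} {x : ℕ × ℕ} :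
    x ∈ gsetP a₁ a₂ d ↔ a₁ * x.1 + a₂ * x.2 = d := by
  simp only [gsetP, Finset.mem_filter, Finset.mem_product, Finset.mem_range]
  constructor
  · tauto
  · intro h
    have hx1 : x.1 ≤ a₁ * x.1 := Nat.le_mul_of_pos_left x.1 h₁
    have hx2 : x.2 ≤ a₂ * x.2 := Nat.le_mul_of_pos_left x.2 h₂
    exact ⟨⟨by omega, by omega⟩, h⟩

private lemma mem_fsetP {a₁ a₂ : ℕ} (h₁ : 0 < a₁) (h₂ : 0 < a₂) {d : ℕ} {x : ℕ × ℕ} :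
    x ∈ fsetP a₁ a₂ d ↔ a₁ * x.1 + a₂ * x.2 = d ∧ Nat.gcd x.1 x.2 = 1 := by
  simp only [fsetP, Finset.mem_filter, mem_gsetP h₁ h₂]

private lemma snd_mod {a₁ a₂ : ℕ} (h₁ : 0 < a₁) (hco : Nat.gcd a₁ a₂ = 1)
    {d rd : ℕ} (hrlt : rd < a₁) (hrmod : (a₂ * rd) % a₁ = d % a₁)
    {x : ℕ × ℕ} (hx : a₁ * x.1 + a₂ * x.2 = d) : x.2 % a₁ = rd := by
  have h1 : (a₂ * x.2) % a₁ = d % a₁ := by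
    rw [← hx, show a₁ * x.1 + a₂ * x.2 = a₂ * x.2 + x.1 * a₁ by ring]
    exact (Nat.add_mul_mod_self_right _ _ _).symm
  have h2 : a₂ * x.2 ≡ a₂ * rd [MOD a₁] := by unfold Nat.ModEq; omega
  have h3 : x.2 ≡ rd [MOD a₁] := Nat.ModEq.cancel_left_of_coprime hco h2
  have h4 : x.2 % a₁ = rd % a₁ := h3
  rw [h4]; exact Nat.mod_eq_of_lt hrlt

private lemma gsetP_card {a₁ a₂ : ℕ} (h₁ : 1 < a₁) (h₂ : 0 < a₂) (hco : Nat.gcd a₁ a₂ = 1)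
    {d rd : ℕ} (hrlt : rd < a₁) (hrmod : (a₂ * rd) % a₁ = d % a₁) :
    (gsetP a₁ a₂ d).card =
      if a₂ * rd ≤ d then (d - a₂ * rd) / (a₁ * a₂) + 1 else 0 := by
  have h₁' : 0 < a₁ := by omega
  split_ifs with hle
  · rw [← Finset.card_range ((d - a₂ * rd) / (a₁ * a₂) + 1)]
    have hdvd : a₁ ∣ d - a₂ * rd := (Nat.modEq_iff_dvd' hle).mp hrmod
    refine Finset.card_bij' (fun x _ => x.2 / a₁)
      (fun k _ => ((d - a₂ * (rd + a₁ * k)) / a₁, rd + a₁ * k)) ?_ ?_ ?_ ?_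
    · intro x hx
      have hx' := (mem_gsetP h₁' h₂).mp hx
      have hm := snd_mod h₁' hco hrlt hrmod hx'
      have hdm := Nat.div_add_mod x.2 a₁
      rw [Finset.mem_range, Nat.lt_add_one_iff, Nat.le_div_iff_mul_le (by positivity)]
      have hsum : a₁ * (x.2 / a₁) + rd = x.2 := by rw [← hm]; exact hdm
      have h5 : a₂ * x.2 ≤ d := hx' ▸ Nat.le_add_left _ _
      have h6 : a₂ * (a₁ * (x.2 / a₁)) + a₂ * rd ≤ d := by
        rw [← Nat.mul_add, hsum]; exact h5
      calc (x.2 / a₁) * (a₁ * a₂) = a₂ * (a₁ * (x.2 / a₁)) := by ring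
        _ ≤ d - a₂ * rd := Nat.le_sub_of_add_le h6
    · intro k hk
      rw [Finset.mem_range, Nat.lt_add_one_iff] at hk
      have hkle : a₁ * (a₂ * k) ≤ d - a₂ * rd := by
        calc a₁ * (a₂ * k) = a₁ * a₂ * k := by ring
          _ ≤ a₁ * a₂ * ((d - a₂ * rd) / (a₁ * a₂)) := Nat.mul_le_mul_left _ hk
          _ ≤ d - a₂ * rd := Nat.mul_div_le _ _
      have hsle : a₂ * (rd + a₁ * k) ≤ d :=
        calc a₂ * (rd + a₁ * k) = a₂ * rd + a₁ * (a₂ * k) := by ring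
          _ ≤ a₂ * rd + (d - a₂ * rd) := Nat.add_le_add_left hkle _
          _ = d := Nat.add_sub_cancel' hle
      rw [mem_gsetP h₁' h₂]
      have hdvd2 : a₁ ∣ d - a₂ * (rd + a₁ * k) := by
        rw [show a₂ * (rd + a₁ * k) = a₂ * rd + a₁ * (a₂ * k) by ring, ← Nat.sub_sub]
        exact Nat.dvd_sub hdvd ⟨a₂ * k, rfl⟩
      rw [Nat.mul_div_cancel' hdvd2]
      exact Nat.sub_add_cancel hsle
    · intro x hx
      have hx' := (mem_gsetP h₁' h₂).mp hx
      have hm := snd_mod h₁' hco hrlt hrmod hx'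
      have hdm := Nat.div_add_mod x.2 a₁
      have h2 : rd + a₁ * (x.2 / a₁) = x.2 := by rw [← hm, Nat.add_comm]; exact hdm
      simp only [h2]
      have h3 : d - a₂ * x.2 = a₁ * x.1 := by rw [← hx']; simp
      rw [h3, Nat.mul_div_cancel_left _ h₁']
    · intro k _
      simp only
      rw [Nat.add_mul_div_left _ _ h₁', Nat.div_eq_of_lt hrlt, Nat.zero_add]
  · rw [Finset.card_eq_zero, Finset.eq_empty_iff_forall_notMem]
    intro x hx
    have hx' := (mem_gsetP h₁' h₂).mp hx
    have hm := snd_mod h₁' hco hrlt hrmod hx'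
    have h4 : rd ≤ x.2 := hm ▸ Nat.mod_le _ _
    have h5 : a₂ * x.2 ≤ d := hx' ▸ Nat.le_add_left _ _
    exact hle (le_trans (Nat.mul_le_mul_left a₂ h4) h5)

/-- real-number form of the count -/
private lemma gsetP_card_real {a₁ a₂ : ℕ} (h₁ : 1 < a₁) (h₂ : 0 < a₂) (hco : Nat.gcd a₁ a₂ = 1)
    {d rd : ℕ} (hrlt : rd < a₁) (hrmod : (a₂ * rd) % a₁ = d % a₁) :
    ((gsetP a₁ a₂ d).card : ℝ) = (d : ℝ) / (a₁ * a₂) +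
      (1 - (rd : ℝ) / a₁ - Int.fract (((d : ℝ) - a₂ * rd) / (a₁ * a₂))) := by
  have hA : (0:ℝ) < (a₁ : ℝ) * a₂ := by positivity
  set t : ℝ := ((d : ℝ) - a₂ * rd) / (a₁ * a₂) with ht
  have key : (d : ℝ) / (a₁ * a₂) - (rd : ℝ) / a₁ = t := by
    rw [ht]
    field_simp
  have hfr : Int.fract t = t - ⌊t⌋ := rfl
  have hfloor : (⌊t⌋ : ℝ) = ((gsetP a₁ a₂ d).card : ℝ) - 1 := by
    rw [gsetP_card h₁ h₂ hco hrlt hrmod]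
    split_ifs with hle
    · have htf : t = ((d - a₂ * rd : ℕ) : ℝ) / ((a₁ * a₂ : ℕ) : ℝ) := by
        rw [ht, Nat.cast_sub hle]
        push_cast
        ring
      have h0 : (0:ℝ) ≤ t := by rw [htf]; positivity
      have hcast : (⌊t⌋₊ : ℤ) = ⌊t⌋ := Int.natCast_floor_eq_floor h0
      have hnf : ⌊t⌋₊ = (d - a₂ * rd) / (a₁ * a₂) := by
        rw [htf, Nat.floor_div_natCast, Nat.floor_natCast]
      rw [← hcast, hnf, Int.cast_natCast, Nat.cast_add, Nat.cast_one]
      ring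
    · have hlt : (d : ℝ) < (a₂ : ℝ) * rd := by
        have := Nat.lt_of_not_le hle
        exact_mod_cast this
      have hrd : (rd : ℝ) ≤ (a₁ : ℝ) - 1 := by
        have : (rd : ℝ) + 1 ≤ a₁ := by exact_mod_cast hrlt
        linarith
      have ha2 : (0:ℝ) < (a₂ : ℝ) := by exact_mod_cast h₂
      have hfl : ⌊t⌋ = -1 := by
        rw [Int.floor_eq_iff]
        constructor
        · rw [ht, le_div_iff₀ hA]
          push_cast
          have hd0 : (0:ℝ) ≤ (d : ℝ) := Nat.cast_nonneg d
          nlinarith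
        · rw [ht, div_lt_iff₀ hA]
          push_cast
          nlinarith
      rw [hfl]
      push_cast
      ring
  rw [hfr, hfloor, ← key]
  ring

private lemma fiber_card {a₁ a₂ : ℕ} (h₁ : 0 < a₁) (h₂ : 0 < a₂) {m e : ℕ} (hm : 0 < m)
    (he : e ∈ m.divisors) :
    ((gsetP a₁ a₂ m).filter (fun x => Nat.gcd x.1 x.2 = e)).card =
      (fsetP a₁ a₂ (m / e)).card := by
  have hedvd : e ∣ m := (Nat.mem_divisors.mp he).1
  have hepos : 0 < e := Nat.pos_of_mem_divisors he
  refine Finset.card_bij' (fun x _ => (x.1 / e, x.2 / e)) (fun y _ => (e * y.1, e * y.2))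
    ?_ ?_ ?_ ?_
  · intro x hx
    rw [Finset.mem_filter, mem_gsetP h₁ h₂] at hx
    obtain ⟨hxe, hg⟩ := hx
    have hd1 : e ∣ x.1 := hg ▸ Nat.gcd_dvd_left _ _
    have hd2 : e ∣ x.2 := hg ▸ Nat.gcd_dvd_right _ _
    have hh1 : e * (x.1 / e) = x.1 := Nat.mul_div_cancel' hd1
    have hh2 : e * (x.2 / e) = x.2 := Nat.mul_div_cancel' hd2
    rw [mem_fsetP h₁ h₂]
    constructor
    · apply (Nat.div_eq_of_eq_mul_left hepos ?_).symm
      calc m = a₁ * x.1 + a₂ * x.2 := hxe.symm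
        _ = a₁ * (e * (x.1 / e)) + a₂ * (e * (x.2 / e)) := by rw [hh1, hh2]
        _ = (a₁ * (x.1 / e) + a₂ * (x.2 / e)) * e := by ring
    · have := Nat.coprime_div_gcd_div_gcd (m := x.1) (n := x.2) (hg ▸ hepos)
      rwa [hg] at this
  · intro y hy
    rw [mem_fsetP h₁ h₂] at hy
    obtain ⟨hye, hg⟩ := hy
    rw [Finset.mem_filter, mem_gsetP h₁ h₂]
    constructor
    · calc a₁ * (e * y.1) + a₂ * (e * y.2) = e * (a₁ * y.1 + a₂ * y.2) := by ring
        _ = e * (m / e) := by rw [hye]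
        _ = m := Nat.mul_div_cancel' hedvd
    · simp only [Nat.gcd_mul_left, hg, Nat.mul_one]
  · intro x hx
    rw [Finset.mem_filter, mem_gsetP h₁ h₂] at hx
    obtain ⟨hxe, hg⟩ := hx
    have hd1 : e ∣ x.1 := hg ▸ Nat.gcd_dvd_left _ _
    have hd2 : e ∣ x.2 := hg ▸ Nat.gcd_dvd_right _ _
    simp only [Nat.mul_div_cancel' hd1, Nat.mul_div_cancel' hd2]
  · intro y hy
    simp only [Nat.mul_div_cancel_left _ hepos]

private lemma gsetP_eq_sum_fsetP {a₁ a₂ : ℕ} (h₁ : 0 < a₁) (h₂ : 0 < a₂) {m : ℕ} (hm : 0 < m) :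
    ∑ d ∈ m.divisors, (fsetP a₁ a₂ d).card = (gsetP a₁ a₂ m).card := by
  have h0 : ∑ d ∈ m.divisors, (fsetP a₁ a₂ d).card
      = ∑ e ∈ m.divisors, (fsetP a₁ a₂ (m / e)).card :=
    (Nat.sum_div_divisors m (fun d => (fsetP a₁ a₂ d).card)).symm
  rw [h0]
  rw [Finset.card_eq_sum_card_fiberwise (f := fun x : ℕ × ℕ => Nat.gcd x.1 x.2)
    (t := m.divisors) ?_]
  · exact Finset.sum_congr rfl fun e he => (fiber_card h₁ h₂ hm he).symm
  · intro x hx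
    rw [Finset.mem_coe, mem_gsetP h₁ h₂] at hx
    rw [Finset.mem_coe, Nat.mem_divisors]
    constructor
    · rw [← hx]
      exact Nat.dvd_add (Dvd.dvd.mul_left (Nat.gcd_dvd_left _ _) _)
        (Dvd.dvd.mul_left (Nat.gcd_dvd_right _ _) _)
    · exact hm.ne'

open ArithmeticFunction in
/-- Let `1 < a₁ < a₂` be coprime integers. With `f n` the number of pairs
`(x₁, x₂)` of nonnegative integers with `a₁x₁ + a₂x₂ = n` and `gcd(x₁,x₂) = 1`, and `r m` the
unique integer with `0 ≤ r m < a₁` and `a₂ · r m ≡ m (mod a₁)`, for every positive `n` one has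
`f(n) = φ(n)/(a₁a₂) + ∑_{d ∣ n} μ(n/d) (1 − r d / a₁ − {(d − a₂ · r d)/(a₁a₂)})`. -/
theorem f_eq_totient_main_term_plus_error (a₁ a₂ : ℕ) (h₁ : 1 < a₁) (h₂ : a₁ < a₂)
    (hco : Nat.gcd a₁ a₂ = 1) (f : ℕ → ℕ)
    (hf : ∀ n, f n = Nat.card {x : ℕ × ℕ //
      a₁ * x.1 + a₂ * x.2 = n ∧ Nat.gcd x.1 x.2 = 1})
    (r : ℕ → ℕ) (hrlt : ∀ m, r m < a₁) (hrmod : ∀ m, (a₂ * r m) % a₁ = m % a₁)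
    (n : ℕ) (hn : 0 < n) :
    (f n : ℝ) = Nat.totient n / (a₁ * a₂) +
      ∑ d ∈ n.divisors, (moebius (n / d) : ℝ) *
        (1 - (r d : ℝ) / a₁ - Int.fract (((d : ℝ) - a₂ * r d) / (a₁ * a₂))) := by
  have h₁' : 0 < a₁ := by omega
  have h₂' : 0 < a₂ := by omega
  have hfcard : f n = (fsetP a₁ a₂ n).card := by
    rw [hf n, ← Nat.card_eq_finsetCard]
    exact Nat.card_congr (Equiv.subtypeEquivRight (fun x => (mem_fsetP h₁' h₂').symm))
  have hdiv : ∀ m : ℕ, 0 < m → ∑ d ∈ m.divisors, ((fsetP a₁ a₂ d).card : ℝ)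
      = ((gsetP a₁ a₂ m).card : ℝ) := by
    intro m hm
    exact_mod_cast congrArg (Nat.cast (R := ℝ)) (gsetP_eq_sum_fsetP h₁' h₂' hm)
  have hinv := (ArithmeticFunction.sum_eq_iff_sum_mul_moebius_eq (R := ℝ)
      (f := fun d => ((fsetP a₁ a₂ d).card : ℝ))
      (g := fun m => ((gsetP a₁ a₂ m).card : ℝ))).mp hdiv n hn
  rw [Nat.sum_divisorsAntidiagonal'
      (f := fun a b => ((moebius a : ℤ) : ℝ) * ((gsetP a₁ a₂ b).card : ℝ))] at hinv
  have htot : (Nat.totient n : ℝ) = ∑ d ∈ n.divisors, ((moebius (n / d) : ℤ) : ℝ) * d := by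
    have h0 : ∀ m : ℕ, 0 < m → ∑ d ∈ m.divisors, ((Nat.totient d : ℝ)) = (m : ℝ) := by
      intro m hm
      exact_mod_cast congrArg (Nat.cast (R := ℝ)) (Nat.sum_totient m)
    have h1 := (ArithmeticFunction.sum_eq_iff_sum_mul_moebius_eq (R := ℝ)
      (f := fun d => ((Nat.totient d : ℝ))) (g := fun m => (m : ℝ))).mp h0 n hn
    rw [Nat.sum_divisorsAntidiagonal'
      (f := fun a b => ((moebius a : ℤ) : ℝ) * (b : ℝ))] at h1
    exact h1.symm
  rw [hfcard, ← hinv, htot, Finset.sum_div, ← Finset.sum_add_distrib]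
  apply Finset.sum_congr rfl
  intro d hd
  rw [gsetP_card_real h₁ h₂' hco (hrlt d) (hrmod d)]
  ring
end

section
/- Let 1 < a_1 < a_2 be integers with gcd(a_1, a_2) = 1. Then for every positive integer n, |f(n) − φ(n)/(a_1·a_2)| < 2^{ω(n)}, where ω(n) is the number of distinct prime factors of n. -/
open Finset ArithmeticFunction

namespace FErrorAux




lemma nat_card_sigma {ι : Type*} [Fintype ι] (F : ι → Type*) [∀ i, Finite (F i)] :
    Nat.card ((i : ι) × F i) = ∑ i, Nat.card (F i) := by
  letI : ∀ i, Fintype (F i) := fun i => Fintype.ofFinite _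
  simp [Nat.card_eq_fintype_card, Fintype.card_sigma]

lemma finite_solP (a₁ a₂ m : ℕ) (h₁ : 0 < a₁) (h₂ : 0 < a₂) (P : ℕ × ℕ → Prop) :
    Finite {x : ℕ × ℕ // a₁ * x.1 + a₂ * x.2 = m ∧ P x} := by
  have hsub : {x : ℕ × ℕ | a₁ * x.1 + a₂ * x.2 = m ∧ P x} ⊆ Set.Iic (m, m) := by
    rintro ⟨x₁, x₂⟩ ⟨hx, -⟩
    dsimp only at hx
    have hb1 : x₁ ≤ a₁ * x₁ := Nat.le_mul_of_pos_left _ h₁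
    have hb2 : x₂ ≤ a₂ * x₂ := Nat.le_mul_of_pos_left _ h₂
    exact Prod.mk_le_mk.mpr ⟨by omega, by omega⟩
  exact ((Set.finite_Iic ((m, m) : ℕ × ℕ)).subset hsub).to_subtype

lemma finite_sol (a₁ a₂ m : ℕ) (h₁ : 0 < a₁) (h₂ : 0 < a₂) :
    Finite {x : ℕ × ℕ // a₁ * x.1 + a₂ * x.2 = m} := by
  have hsub : {x : ℕ × ℕ | a₁ * x.1 + a₂ * x.2 = m} ⊆ Set.Iic (m, m) := by
    rintro ⟨x₁, x₂⟩ hx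
    simp only [Set.mem_setOf_eq] at hx
    have hb1 : x₁ ≤ a₁ * x₁ := Nat.le_mul_of_pos_left _ h₁
    have hb2 : x₂ ≤ a₂ * x₂ := Nat.le_mul_of_pos_left _ h₂
    exact Prod.mk_le_mk.mpr ⟨by omega, by omega⟩
  exact ((Set.finite_Iic ((m, m) : ℕ × ℕ)).subset hsub).to_subtype




lemma quot_eq (a₁ a₂ n x₁ x₂ : ℕ) (hn : n ≠ 0) (hx : a₁ * x₁ + a₂ * x₂ = n) :
    0 < Nat.gcd x₁ x₂ ∧ Nat.gcd x₁ x₂ ∣ n ∧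
      a₁ * (x₁ / Nat.gcd x₁ x₂) + a₂ * (x₂ / Nat.gcd x₁ x₂) = n / Nat.gcd x₁ x₂ ∧
      Nat.gcd (x₁ / Nat.gcd x₁ x₂) (x₂ / Nat.gcd x₁ x₂) = 1 := by
  set g := Nat.gcd x₁ x₂ with hg
  have hgd : g ∣ n := hx ▸ dvd_add ((Nat.gcd_dvd_left x₁ x₂).mul_left a₁)
    ((Nat.gcd_dvd_right x₁ x₂).mul_left a₂)
  have hgpos : 0 < g := by
    rcases Nat.eq_zero_or_pos g with h | h
    · obtain ⟨h1, h2⟩ := Nat.gcd_eq_zero_iff.mp (hg ▸ h)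
      subst h1; subst h2; simp at hx; omega
    · exact h
  refine ⟨hgpos, hgd, ?_, Nat.coprime_div_gcd_div_gcd hgpos⟩
  have e1 : a₁ * (x₁ / g) = a₁ * x₁ / g := (Nat.mul_div_assoc a₁ (Nat.gcd_dvd_left x₁ x₂)).symm
  have e2 : a₂ * (x₂ / g) = a₂ * x₂ / g := (Nat.mul_div_assoc a₂ (Nat.gcd_dvd_right x₁ x₂)).symm
  rw [e1, e2, ← Nat.add_div_of_dvd_right ((Nat.gcd_dvd_left x₁ x₂).mul_left a₁), hx]



lemma partition (a₁ a₂ : ℕ) (h₁ : 0 < a₁) (h₂ : 0 < a₂) (n : ℕ) (hn : 0 < n)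
    (hfin : Finite {x : ℕ × ℕ // a₁ * x.1 + a₂ * x.2 = n}) :
    Nat.card {x : ℕ × ℕ // a₁ * x.1 + a₂ * x.2 = n}
      = ∑ d ∈ n.divisors,
          Nat.card {x : ℕ × ℕ // a₁ * x.1 + a₂ * x.2 = d ∧ Nat.gcd x.1 x.2 = 1} := by
  classical
  set Φ : {x : ℕ × ℕ // a₁ * x.1 + a₂ * x.2 = n} → {d // d ∈ n.divisors} := fun x =>
    ⟨n / Nat.gcd x.1.1 x.1.2, Nat.mem_divisors.mpr
      ⟨Nat.div_dvd_of_dvd (quot_eq a₁ a₂ n x.1.1 x.1.2 hn.ne' x.2).2.1, hn.ne'⟩⟩ with hΦ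
  rw [← Nat.card_congr (Equiv.sigmaFiberEquiv Φ), nat_card_sigma]
  have hfib : ∀ b : {d // d ∈ n.divisors},
      Nat.card {x // Φ x = b}
        = Nat.card {y : ℕ × ℕ // a₁ * y.1 + a₂ * y.2 = (b : ℕ) ∧ Nat.gcd y.1 y.2 = 1} := by
    rintro ⟨d, hd⟩
    obtain ⟨hdvd, hn0⟩ := Nat.mem_divisors.mp hd
    have hdpos : 0 < d := Nat.pos_of_mem_divisors hd
    have hcd : n / d * d = n := Nat.div_mul_cancel hdvd
    have hcdvd : n / d ∣ n := Nat.div_dvd_of_dvd hdvd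
    have hcpos : 0 < n / d := Nat.div_pos (Nat.le_of_dvd hn hdvd) hdpos
    apply Nat.card_congr
    refine ⟨fun x => ⟨(x.1.1.1 / Nat.gcd x.1.1.1 x.1.1.2, x.1.1.2 / Nat.gcd x.1.1.1 x.1.1.2),
        ?_, ?_⟩, fun y => ⟨⟨((n / d) * y.1.1, (n / d) * y.1.2), ?_⟩, ?_⟩, ?_, ?_⟩
    · -- equation for forward map
      obtain ⟨⟨⟨x₁, x₂⟩, hx⟩, hb⟩ := x
      obtain ⟨hgpos, hgdvd, heq, hcop⟩ := quot_eq a₁ a₂ n x₁ x₂ hn.ne' hx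
      have hgd : n / Nat.gcd x₁ x₂ = d := by
        simpa [hΦ, Subtype.ext_iff] using hb
      dsimp only at *
      rw [heq]
      exact hgd
    · obtain ⟨⟨⟨x₁, x₂⟩, hx⟩, hb⟩ := x
      exact (quot_eq a₁ a₂ n x₁ x₂ hn.ne' hx).2.2.2
    · -- inverse lands in solutions of n
      obtain ⟨⟨y₁, y₂⟩, hy, hcop⟩ := y
      dsimp only at *
      have : a₁ * (n / d * y₁) + a₂ * (n / d * y₂) = n / d * (a₁ * y₁ + a₂ * y₂) := by ring
      rw [this, hy]
      -- (b : ℕ) = d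
      exact hcd
    · -- fiber condition for inverse
      obtain ⟨⟨y₁, y₂⟩, hy, hcop⟩ := y
      dsimp only at *
      apply Subtype.ext
      dsimp [hΦ]
      have hg : Nat.gcd (n / d * y₁) (n / d * y₂) = n / d := by
        rw [Nat.gcd_mul_left, hcop, mul_one]
      show n / Nat.gcd (n / d * y₁) (n / d * y₂) = d
      rw [hg, Nat.div_div_self hdvd hn.ne']
    · -- left inverse
      rintro ⟨⟨⟨x₁, x₂⟩, hx⟩, hb⟩
      obtain ⟨hgpos, hgdvd, heq, hcop⟩ := quot_eq a₁ a₂ n x₁ x₂ hn.ne' hx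
      have hgd : n / Nat.gcd x₁ x₂ = d := by
        simpa [hΦ, Subtype.ext_iff] using hb
      apply Subtype.ext
      apply Subtype.ext
      dsimp only
      have hdg : d = n / Nat.gcd x₁ x₂ := hgd.symm
      have hgcd' : n / d = Nat.gcd x₁ x₂ := by
        rw [hdg, Nat.div_div_self hgdvd hn.ne']
      rw [hgcd']
      exact Prod.ext (Nat.mul_div_cancel' (Nat.gcd_dvd_left x₁ x₂))
        (Nat.mul_div_cancel' (Nat.gcd_dvd_right x₁ x₂))
    · -- right inverse
      rintro ⟨⟨y₁, y₂⟩, hy, hcop⟩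
      apply Subtype.ext
      dsimp only
      have hg : Nat.gcd (n / d * y₁) (n / d * y₂) = n / d := by
        rw [Nat.gcd_mul_left, hcop, mul_one]
      rw [hg]
      exact Prod.ext (Nat.mul_div_cancel_left y₁ hcpos) (Nat.mul_div_cancel_left y₂ hcpos)
  calc (∑ b : {d // d ∈ n.divisors}, Nat.card {x // Φ x = b})
      = ∑ b : {d // d ∈ n.divisors},
          Nat.card {y : ℕ × ℕ // a₁ * y.1 + a₂ * y.2 = (b : ℕ) ∧ Nat.gcd y.1 y.2 = 1} :=
        Finset.sum_congr rfl fun b _ => hfib b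
    _ = _ := Finset.sum_coe_sort n.divisors (fun d => Nat.card {y : ℕ × ℕ // a₁ * y.1 + a₂ * y.2 = d ∧ Nat.gcd y.1 y.2 = 1})


lemma N_card (a₁ a₂ : ℕ) (h₁ : 0 < a₁) (h₂ : 0 < a₂) (m : ℕ) :
    Nat.card {x : ℕ × ℕ // a₁ * x.1 + a₂ * x.2 = m}
      = ((Finset.range (m / a₁ + 1)).filter fun x => a₂ ∣ (m - a₁ * x) ∧ a₁ * x ≤ m).card := by
  classical
  rw [← Nat.card_eq_finsetCard]
  apply Nat.card_congr
  refine ⟨fun x => ⟨x.1.1, ?_⟩, fun y => ⟨(y.1, (m - a₁ * y.1) / a₂), ?_⟩, ?_, ?_⟩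
  · obtain ⟨⟨x₁, x₂⟩, hx⟩ := x
    change a₁ * x₁ + a₂ * x₂ = m at hx
    dsimp only
    have hle : a₁ * x₁ ≤ m := by omega
    refine Finset.mem_filter.mpr ⟨Finset.mem_range.mpr ?_, ⟨⟨x₂, by omega⟩, hle⟩⟩
    have : x₁ ≤ m / a₁ := (Nat.le_div_iff_mul_le h₁).mpr (by rw [mul_comm]; omega)
    omega
  · obtain ⟨y, hy⟩ := y
    obtain ⟨hr, ⟨hdvd, hle⟩⟩ := Finset.mem_filter.mp hy
    dsimp only
    have := Nat.mul_div_cancel' hdvd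
    omega
  · rintro ⟨⟨x₁, x₂⟩, hx⟩
    apply Subtype.ext
    change a₁ * x₁ + a₂ * x₂ = m at hx
    dsimp only
    have h2 : m - a₁ * x₁ = a₂ * x₂ := by omega
    rw [h2, Nat.mul_div_cancel_left x₂ h₂]
  · rintro ⟨y, hy⟩
    exact Subtype.ext rfl

lemma residue (a₁ a₂ : ℕ) (h₂ : 0 < a₂) (hco : Nat.gcd a₁ a₂ = 1) (m : ℕ) :
    ∃ r, r < a₂ ∧ ∀ x, a₁ * x ≤ m → (a₂ ∣ m - a₁ * x ↔ x % a₂ = r) := by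
  haveI : NeZero a₂ := ⟨h₂.ne'⟩
  set u : (ZMod a₂)ˣ := ZMod.unitOfCoprime a₁ hco with hu
  set z : ZMod a₂ := ((u⁻¹ : (ZMod a₂)ˣ) : ZMod a₂) * (m : ZMod a₂) with hz
  refine ⟨z.val, ZMod.val_lt z, ?_⟩
  have hmod : a₁ * z.val ≡ m [MOD a₂] := by
    rw [← ZMod.natCast_eq_natCast_iff]
    push_cast
    rw [ZMod.natCast_rightInverse z, hz]
    have hcoe : ((u : (ZMod a₂)ˣ) : ZMod a₂) = (a₁ : ZMod a₂) := rfl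
    rw [← hcoe, ← mul_assoc, ← Units.val_mul, mul_inv_cancel, Units.val_one, one_mul]
  intro x hx
  rw [← Nat.modEq_iff_dvd' hx]
  constructor
  · intro h
    have h2 : a₁ * x ≡ a₁ * z.val [MOD a₂] := h.trans hmod.symm
    have := Nat.ModEq.cancel_left_of_coprime (by rwa [Nat.gcd_comm]) h2
    calc x % a₂ = z.val % a₂ := this
      _ = z.val := Nat.mod_eq_of_lt (ZMod.val_lt z)
  · intro h
    have hxz : x ≡ z.val [MOD a₂] := by
      unfold Nat.ModEq
      rw [h, Nat.mod_eq_of_lt (ZMod.val_lt z)]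
    exact (hxz.mul_left a₁).trans hmod



-- nat-level count bounds for S = AP-filtered range
lemma card_bounds (a₂ M r : ℕ) (h₂ : 0 < a₂) (hr : r < a₂) :
    ((Finset.range (M + 1)).filter fun x => x % a₂ = r).card ≤ M / a₂ + 1 ∧
    M + 1 ≤ a₂ * (((Finset.range (M + 1)).filter fun x => x % a₂ = r).card + 1) := by
  classical
  set S := (Finset.range (M + 1)).filter fun x => x % a₂ = r with hS
  constructor
  · have hinj := Finset.card_le_card_of_injOn (s := S) (t := Finset.range (M / a₂ + 1))
      (fun x => x / a₂) ?_ ?_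
    · simpa using hinj
    · intro x hx
      dsimp only
      obtain ⟨hxr, -⟩ := Finset.mem_filter.mp hx
      exact Finset.mem_range.mpr (by
        have := Nat.div_le_div_right (c := a₂) (Nat.lt_succ_iff.mp (Finset.mem_range.mp hxr))
        omega)
    · intro x hx y hy hdiv
      dsimp only at hdiv
      obtain ⟨-, hxm⟩ := Finset.mem_filter.mp hx
      obtain ⟨-, hym⟩ := Finset.mem_filter.mp hy
      calc x = a₂ * (x / a₂) + x % a₂ := (Nat.div_add_mod x a₂).symm
        _ = a₂ * (y / a₂) + y % a₂ := by rw [hdiv, hxm, hym]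
        _ = y := Nat.div_add_mod y a₂
  · by_cases hrM : r ≤ M
    · set q := (M - r) / a₂ with hq
      have hcard : q + 1 ≤ S.card := by
        have hinj := Finset.card_le_card_of_injOn (s := Finset.range (q + 1)) (t := S)
          (fun k => r + a₂ * k) ?_ ?_
        · simpa using hinj
        · intro k hk
          dsimp only
          have hk' : k ≤ q := Nat.lt_succ_iff.mp (Finset.mem_range.mp hk)
          have hmul : k * a₂ ≤ M - r := (Nat.le_div_iff_mul_le h₂).mp (hq ▸ hk')
          rw [mul_comm] at hmul
          refine Finset.mem_filter.mpr ⟨Finset.mem_range.mpr (by omega), ?_⟩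
          rw [Nat.add_mul_mod_self_left, Nat.mod_eq_of_lt hr]
        · intro k _ l _ hkl
          dsimp only at hkl
          have := Nat.eq_of_mul_eq_mul_left h₂ (by omega : a₂ * k = a₂ * l)
          exact this
      have hdm : a₂ * q + (M - r) % a₂ = M - r := Nat.div_add_mod (M - r) a₂
      have hmod := Nat.mod_lt (M - r) h₂
      have e2 : M + 1 ≤ a₂ * (q + 2) := by
        have hring : a₂ * (q + 2) = a₂ * q + 2 * a₂ := by ring
        omega
      have e3 : a₂ * (q + 2) ≤ a₂ * (S.card + 1) := Nat.mul_le_mul_left _ (by omega)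
      omega
    · have hempty : S = ∅ := by
        apply Finset.eq_empty_of_forall_notMem
        intro x hx
        obtain ⟨hxr, hxm⟩ := Finset.mem_filter.mp hx
        have h1 : x ≤ M := Nat.lt_succ_iff.mp (Finset.mem_range.mp hxr)
        have h2 : x % a₂ ≤ x := Nat.mod_le x a₂
        omega
      rw [hempty]
      simp only [Finset.card_empty]
      omega



lemma N_bounds (a₁ a₂ : ℕ) (h₁ : 1 < a₁) (h₂ : 1 < a₂) (hco : Nat.gcd a₁ a₂ = 1) (m : ℕ) :
    ((Nat.card {x : ℕ × ℕ // a₁ * x.1 + a₂ * x.2 = m} : ℝ) ≤ (m : ℝ) / (a₁ * a₂) + 1) ∧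
    ((m : ℝ) / (a₁ * a₂) - 1 < (Nat.card {x : ℕ × ℕ // a₁ * x.1 + a₂ * x.2 = m} : ℝ)) := by
  have h₁' : 0 < a₁ := by omega
  have h₂' : 0 < a₂ := by omega
  obtain ⟨r, hr, hiff⟩ := residue a₁ a₂ h₂' hco m
  set M := m / a₁ with hM
  have hfilter : ((Finset.range (M + 1)).filter fun x => a₂ ∣ (m - a₁ * x) ∧ a₁ * x ≤ m)
      = (Finset.range (M + 1)).filter fun x => x % a₂ = r := by
    apply Finset.filter_congr
    intro x hx
    have hxM : x ≤ M := Nat.lt_succ_iff.mp (Finset.mem_range.mp hx)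
    have hax : a₁ * x ≤ m := by
      calc a₁ * x ≤ a₁ * M := Nat.mul_le_mul_left _ hxM
        _ = M * a₁ := mul_comm _ _
        _ ≤ m := Nat.div_mul_le_self m a₁
    simp only [hax, and_true]
    exact hiff x hax
  have hN : Nat.card {x : ℕ × ℕ // a₁ * x.1 + a₂ * x.2 = m}
      = ((Finset.range (M + 1)).filter fun x => x % a₂ = r).card := by
    rw [N_card a₁ a₂ h₁' h₂' m, hfilter]
  obtain ⟨hub, hlb⟩ := card_bounds a₂ M r h₂' hr
  set c := ((Finset.range (M + 1)).filter fun x => x % a₂ = r).card with hc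
  have hpos : (0 : ℝ) < (a₁ : ℝ) * a₂ := by positivity
  constructor
  · -- upper bound
    rw [hN]
    have h1 : c ≤ m / (a₁ * a₂) + 1 := by
      have h0 := Nat.div_div_eq_div_mul m a₁ a₂
      rw [← hM] at h0
      omega
    have h2 : ((m / (a₁ * a₂) : ℕ) : ℝ) ≤ (m : ℝ) / ((a₁ : ℝ) * a₂) := by
      have := Nat.cast_div_le (α := ℝ) (m := m) (n := a₁ * a₂)
      push_cast at this ⊢
      exact this
    have h3 : (c : ℝ) ≤ ((m / (a₁ * a₂) : ℕ) : ℝ) + 1 := by exact_mod_cast h1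
    linarith
  · -- lower bound: m < (c+1) * a₁ * a₂ in ℕ
    rw [hN]
    have hnat : m < (c + 1) * (a₁ * a₂) := by
      -- m < a₁ * (M+1) ≤ a₁ * (a₂ * (c+1))
      have hdm : a₁ * M + m % a₁ = m := Nat.div_add_mod m a₁
      have hmod : m % a₁ < a₁ := Nat.mod_lt m h₁'
      have e1 : m < a₁ * (M + 1) := by
        have : a₁ * (M + 1) = a₁ * M + a₁ := by ring
        omega
      have e3 : a₁ * (M + 1) ≤ a₁ * (a₂ * (c + 1)) := Nat.mul_le_mul_left _ hlb
      have e4 : a₁ * (a₂ * (c + 1)) = (c + 1) * (a₁ * a₂) := by ring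
      omega
    have hreal : (m : ℝ) < ((c : ℝ) + 1) * ((a₁ : ℝ) * a₂) := by exact_mod_cast hnat
    have := (div_lt_iff₀ hpos).mpr hreal
    linarith

lemma N_one (a₁ a₂ : ℕ) (h₁ : 1 < a₁) (h₂ : 1 < a₂) :
    Nat.card {x : ℕ × ℕ // a₁ * x.1 + a₂ * x.2 = 1} = 0 := by
  have : IsEmpty {x : ℕ × ℕ // a₁ * x.1 + a₂ * x.2 = 1} := by
    constructor
    rintro ⟨⟨x₁, x₂⟩, hx⟩
    change a₁ * x₁ + a₂ * x₂ = 1 at hx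
    rcases Nat.eq_zero_or_pos x₁ with h | h
    · rcases Nat.eq_zero_or_pos x₂ with h' | h'
      · subst h; subst h'; simp at hx
      · have : a₂ ≤ a₂ * x₂ := Nat.le_mul_of_pos_right _ h'
        omega
    · have : a₁ ≤ a₁ * x₁ := Nat.le_mul_of_pos_right _ h
      omega
  exact Nat.card_of_isEmpty



end FErrorAux

open FErrorAux Finset ArithmeticFunction
open scoped ArithmeticFunction.Moebius

/-- Let `1 < a₁ < a₂` be coprime integers. With `f n` the number of pairs
`(x₁, x₂)` of nonnegative integers with `a₁x₁ + a₂x₂ = n` and `gcd(x₁,x₂) = 1`, for every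
positive integer `n` one has `|f(n) − φ(n)/(a₁a₂)| < 2 ^ ω(n)`, where `ω(n)` is the number of
distinct prime factors of `n`. -/
theorem f_error_term_bound (a₁ a₂ : ℕ) (h₁ : 1 < a₁) (h₂ : a₁ < a₂)
    (hco : Nat.gcd a₁ a₂ = 1) (f : ℕ → ℕ)
    (hf : ∀ n, f n = Nat.card {x : ℕ × ℕ //
      a₁ * x.1 + a₂ * x.2 = n ∧ Nat.gcd x.1 x.2 = 1})
    (n : ℕ) (hn : 0 < n) :
    |(f n : ℝ) - Nat.totient n / (a₁ * a₂)| < 2 ^ n.primeFactors.card := by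
  classical
  have h₂' : 1 < a₂ := lt_trans h₁ h₂
  have h₁p : 0 < a₁ := by omega
  have h₂p : 0 < a₂ := by omega
  -- Möbius inversion for f
  have hkey : ∀ k > 0, ∑ i ∈ k.divisors, (f i : ℝ)
      = ((Nat.card {x : ℕ × ℕ // a₁ * x.1 + a₂ * x.2 = k} : ℕ) : ℝ) := by
    intro k hk
    rw [partition a₁ a₂ h₁p h₂p k hk (finite_sol a₁ a₂ k h₁p h₂p)]
    push_cast
    exact Finset.sum_congr rfl fun d _ => by rw [hf d]
  have hinv := (ArithmeticFunction.sum_eq_iff_sum_smul_moebius_eq.mp hkey) n hn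
  have hkeyφ : ∀ k > 0, ∑ i ∈ k.divisors, ((Nat.totient i : ℕ) : ℝ) = ((k : ℕ) : ℝ) := by
    intro k hk
    exact_mod_cast Nat.sum_totient k
  have hinvφ := (ArithmeticFunction.sum_eq_iff_sum_smul_moebius_eq.mp hkeyφ) n hn
  set A := n.divisorsAntidiagonal with hA
  have habpos : (0 : ℝ) < (a₁ : ℝ) * a₂ := by positivity
  set E : ℕ → ℝ := fun m =>
    ((Nat.card {x : ℕ × ℕ // a₁ * x.1 + a₂ * x.2 = m} : ℕ) : ℝ) - m / ((a₁ : ℝ) * a₂) with hE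
  have hdiff : (f n : ℝ) - (Nat.totient n : ℝ) / ((a₁ : ℝ) * a₂)
      = ∑ x ∈ A, (μ x.1 : ℝ) * E x.2 := by
    rw [← hinv, ← hinvφ, Finset.sum_div, ← Finset.sum_sub_distrib]
    apply Finset.sum_congr rfl
    intro x hx
    rw [zsmul_eq_mul, zsmul_eq_mul, hE]
    ring
  have hEub : ∀ m, E m ≤ 1 := fun m => by
    have h := (N_bounds a₁ a₂ h₁ h₂' hco m).1
    rw [hE]; dsimp only; linarith
  have hElb : ∀ m, -1 < E m := fun m => by
    have h := (N_bounds a₁ a₂ h₁ h₂' hco m).2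
    rw [hE]; dsimp only; linarith
  have hterm : ∀ x ∈ A, ((μ x.1 : ℝ) * E x.2 ≤ (if Squarefree x.1 then (1:ℝ) else 0)) ∧
      (-(if Squarefree x.1 then (1:ℝ) else 0) ≤ (μ x.1 : ℝ) * E x.2) := by
    intro x _
    by_cases hsq : Squarefree x.1
    · simp only [hsq, if_true]
      have habs : |(μ x.1 : ℝ)| = 1 := by
        rw [ArithmeticFunction.moebius_apply_of_squarefree hsq]
        push_cast
        rw [abs_pow, abs_neg, abs_one, one_pow]
      have hE1 : |E x.2| ≤ 1 := abs_le.mpr ⟨by linarith [hElb x.2], hEub x.2⟩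
      have : |(μ x.1 : ℝ) * E x.2| ≤ 1 := by
        rw [abs_mul, habs, one_mul]; exact hE1
      exact ⟨(abs_le.mp this).2, (abs_le.mp this).1⟩
    · simp [ArithmeticFunction.moebius_eq_zero_of_not_squarefree hsq, hsq]
  have hsumc : ∑ x ∈ A, (if Squarefree x.1 then (1:ℝ) else 0)
      = 2 ^ n.primeFactors.card := by
    rw [hA, Nat.sum_divisorsAntidiagonal (f := fun d _ => if Squarefree d then (1:ℝ) else 0)]
    rw [Finset.sum_boole]
    have hcard : (n.divisors.filter fun d => Squarefree d).card = 2 ^ n.primeFactors.card := by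
      have h := Nat.sum_divisors_filter_squarefree hn.ne' (α := ℕ) (f := fun _ => (1:ℕ))
      simpa [Finset.sum_const, smul_eq_mul, Finset.card_powerset, Nat.factors_eq,
        Nat.toFinset_factors] using h
    rw [hcard]
    push_cast
    ring
  -- strict witnesses
  have hmem1n : ((1, n) : ℕ × ℕ) ∈ A := by
    rw [hA, Nat.mem_divisorsAntidiagonal]
    exact ⟨one_mul n, hn.ne'⟩
  have hlow : ∑ x ∈ A, -(if Squarefree x.1 then (1:ℝ) else 0) < ∑ x ∈ A, (μ x.1 : ℝ) * E x.2 := by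
    apply Finset.sum_lt_sum (fun i hi => (hterm i hi).2)
    refine ⟨(1, n), hmem1n, ?_⟩
    have : (μ 1 : ℝ) = 1 := by
      rw [ArithmeticFunction.moebius_apply_one]; norm_num
    rw [if_pos squarefree_one, this, one_mul]
    exact hElb n
  have hupp : ∑ x ∈ A, (μ x.1 : ℝ) * E x.2 < ∑ x ∈ A, (if Squarefree x.1 then (1:ℝ) else 0) := by
    apply Finset.sum_lt_sum (fun i hi => (hterm i hi).1)
    rcases eq_or_ne n 1 with rfl | hne
    · refine ⟨(1, 1), ?_, ?_⟩
      · rw [hA, Nat.divisorsAntidiagonal_one]; simp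
      · have hμ1 : (μ 1 : ℝ) = 1 := by
          rw [ArithmeticFunction.moebius_apply_one]; norm_num
        rw [if_pos squarefree_one, hμ1, one_mul, hE]
        dsimp only
        rw [N_one a₁ a₂ h₁ h₂']
        have : (0:ℝ) < 1 / ((a₁:ℝ) * a₂) := by positivity
        push_cast
        linarith
    · obtain ⟨p, hp, hpd⟩ := Nat.exists_prime_and_dvd hne
      refine ⟨(p, n / p), ?_, ?_⟩
      · rw [hA, Nat.mem_divisorsAntidiagonal]
        exact ⟨Nat.mul_div_cancel' hpd, hn.ne'⟩
      · rw [if_pos hp.squarefree]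
        have hμp : (μ p : ℝ) = -1 := by
          rw [ArithmeticFunction.moebius_apply_prime hp]; norm_num
        rw [hμp]
        have := hElb (n / p)
        nlinarith [hElb (n / p)]
  rw [Finset.sum_neg_distrib, hsumc] at hlow
  rw [hsumc] at hupp
  have goal_eq : (Nat.totient n : ℝ) / ((a₁ : ℝ) * (a₂ : ℝ)) = (Nat.totient n : ℝ) / ((a₁ : ℝ) * a₂) := rfl
  rw [abs_lt]
  constructor
  · push_cast [hdiff] at *
    linarith [hlow]
  · push_cast [hdiff] at *
    linarith [hupp]
end

section
/- Let 1 < a_1 < a_2 be integers with gcd(a_1, a_2) = 1. Then the integer a_1·a_2 cannot be written as a_1·x_1 + a_2·x_2 with x_1, x_2 nonnegative integers and gcd(x_1, x_2) = 1. -/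
/-- Let `1 < a₁ < a₂` be coprime integers. Then `a₁ * a₂` cannot be written as
`a₁ * x₁ + a₂ * x₂` with `x₁, x₂` nonnegative integers satisfying `gcd (x₁, x₂) = 1`. -/
theorem product_not_coprime_representable (a₁ a₂ : ℕ) (h₁ : 1 < a₁) (h₂ : a₁ < a₂)
    (hco : Nat.gcd a₁ a₂ = 1) :
    ¬ ∃ x₁ x₂ : ℕ, a₁ * x₁ + a₂ * x₂ = a₁ * a₂ ∧ Nat.gcd x₁ x₂ = 1 := by
  rintro ⟨x₁, x₂, heq, hg⟩
  -- a₁ ∣ a₂ * x₂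
  have hd : a₁ ∣ a₂ * x₂ := by
    have : a₁ ∣ a₁ * x₁ + a₂ * x₂ := heq ▸ dvd_mul_right a₁ a₂
    exact (Nat.dvd_add_right ⟨x₁, rfl⟩).mp this
  have hd2 : a₁ ∣ x₂ := (Nat.Coprime.dvd_of_dvd_mul_left hco hd)
  obtain ⟨k, hk⟩ := hd2
  rcases Nat.eq_zero_or_pos k with hk0 | hk1
  · subst hk0
    simp at hk
    subst hk
    simp at heq
    have hx1 : x₁ = a₂ := by
      rcases heq with h | h
      · exact h
      · omega
    subst hx1
    simp [Nat.gcd_comm] at hg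
    omega
  · have hge : a₂ * x₂ ≥ a₁ * a₂ := by
      calc a₂ * x₂ = a₂ * (a₁ * k) := by rw [hk]
        _ ≥ a₂ * (a₁ * 1) := by
          apply Nat.mul_le_mul_left
          exact Nat.mul_le_mul_left _ hk1
        _ = a₁ * a₂ := by ring
    have hx10 : x₁ = 0 := by nlinarith
    subst hx10
    simp at heq hg
    subst hg
    nlinarith
end

section
/- Let 1 < a_1 < a_2 be integers with gcd(a_1, a_2) = 1. Then a_1·a_2 ≤ G_{a_1,a_2}. -/
set_option maxHeartbeats 1000000

open Finset ArithmeticFunction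

lemma sum_moebius_divisors (k : ℕ) :
    ∑ d ∈ k.divisors, moebius d = if k = 1 then 1 else 0 := by
  have h := congrArg (fun f : ArithmeticFunction ℤ => f k) moebius_mul_coe_zeta
  simp only [coe_mul_zeta_apply, one_apply] at h
  exact h

lemma moebius_totient_identity (n : ℕ) (hn : 0 < n) :
    ∑ d ∈ n.divisors, moebius d * ((n / d : ℕ) : ℤ) = (n.totient : ℤ) := by
  have h := (sum_eq_iff_sum_smul_moebius_eq (R := ℤ)
    (f := fun m => (m.totient : ℤ)) (g := fun m => (m : ℤ))).mp ?_ n hn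
  · rw [← h, ← Nat.sum_divisorsAntidiagonal (f := fun d e => moebius d * ((e : ℕ) : ℤ))]
    exact Finset.sum_congr rfl fun x _ => (zsmul_eq_mul _ _).symm
  · intro m hm
    rw [← Nat.cast_sum]
    norm_cast
    exact Nat.sum_totient m

lemma totient_two_pow_card (n : ℕ) :
    n ≤ n.totient * 2 ^ n.primeFactors.card := by
  have key := Nat.totient_mul_prod_primeFactors n
  have hpos : 0 < ∏ p ∈ n.primeFactors, (p - 1) := by
    apply Finset.prod_pos
    intro p hp
    have := (Nat.prime_of_mem_primeFactors hp).two_le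
    omega
  have hle : ∏ p ∈ n.primeFactors, p ≤ 2 ^ n.primeFactors.card * ∏ p ∈ n.primeFactors, (p - 1) := by
    rw [← Finset.prod_const, ← Finset.prod_mul_distrib]
    apply Finset.prod_le_prod'
    intro p hp
    have := (Nat.prime_of_mem_primeFactors hp).two_le
    omega
  have : n * ∏ p ∈ n.primeFactors, (p - 1)
      ≤ (n.totient * 2 ^ n.primeFactors.card) * ∏ p ∈ n.primeFactors, (p - 1) := by
    calc n * ∏ p ∈ n.primeFactors, (p - 1) = n.totient * ∏ p ∈ n.primeFactors, p := key.symm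
    _ ≤ n.totient * (2 ^ n.primeFactors.card * ∏ p ∈ n.primeFactors, (p - 1)) :=
        Nat.mul_le_mul_left _ hle
    _ = (n.totient * 2 ^ n.primeFactors.card) * ∏ p ∈ n.primeFactors, (p - 1) := by ring
  exact Nat.le_of_mul_le_mul_right this hpos

lemma sixteen_pow_card_le (n : ℕ) (hn : n ≠ 0) :
    16 ^ n.primeFactors.card ≤ 16 ^ 6 * n := by
  classical
  set s := n.primeFactors with hs
  have hsplit : (s.filter (fun p => p < 16)).card + (s.filter (fun p => ¬ p < 16)).card = s.card :=
    Finset.card_filter_add_card_filter_not _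
  have h1 : (s.filter (fun p => p < 16)).card ≤ 6 := by
    have hsub : s.filter (fun p => p < 16) ⊆ (Finset.range 16).filter Nat.Prime := by
      intro p hp
      simp only [Finset.mem_filter, Finset.mem_range] at *
      exact ⟨hp.2, Nat.prime_of_mem_primeFactors hp.1⟩
    calc (s.filter (fun p => p < 16)).card ≤ ((Finset.range 16).filter Nat.Prime).card :=
          Finset.card_le_card hsub
      _ = 6 := by decide
  have h2 : 16 ^ (s.filter (fun p => ¬ p < 16)).card ≤ n := by
    calc 16 ^ (s.filter (fun p => ¬ p < 16)).card
        = ∏ _p ∈ s.filter (fun p => ¬ p < 16), 16 := by rw [Finset.prod_const]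
      _ ≤ ∏ p ∈ s.filter (fun p => ¬ p < 16), p := by
          apply Finset.prod_le_prod'
          intro p hp
          simp only [Finset.mem_filter] at hp
          omega
      _ ≤ ∏ p ∈ s, p := by
          apply Finset.prod_le_prod_of_subset_of_one_le' (Finset.filter_subset _ _)
          intro p hp _
          exact (Nat.prime_of_mem_primeFactors hp).one_lt.le
      _ ≤ n := Nat.le_of_dvd (Nat.pos_of_ne_zero hn) (Nat.prod_primeFactors_dvd n)
  calc 16 ^ s.card = 16 ^ (s.filter (fun p => p < 16)).card
        * 16 ^ (s.filter (fun p => ¬ p < 16)).card := by rw [← pow_add, hsplit]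
    _ ≤ 16 ^ 6 * n := Nat.mul_le_mul (Nat.pow_le_pow_right (by norm_num) h1) h2

lemma card_squarefree_divisors (n : ℕ) (hn : n ≠ 0) :
    (n.divisors.filter Squarefree).card = 2 ^ n.primeFactors.card := by
  classical
  have h := Nat.sum_divisors_filter_squarefree hn (α := ℕ) (f := fun _ => 1)
  simp only [Finset.sum_const, smul_eq_mul, mul_one] at h
  rw [h, Finset.card_powerset]
  congr 1
  rw [Nat.factors_eq]
  simp [Nat.toFinset_factors]

lemma crt_exists (s : Finset ℕ) (hs : ∀ p ∈ s, p.Prime) (c : (p : ℕ) → ZMod p) :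
    ∃ u : ℕ, ∀ p ∈ s, (u : ZMod p) = c p := by
  classical
  induction s using Finset.induction_on with
  | empty => exact ⟨0, fun p hp => absurd hp (Finset.notMem_empty p)⟩
  | @insert q s hqs ih =>
    obtain ⟨u, hu⟩ := ih (fun p hp => hs p (Finset.mem_insert_of_mem hp))
    have hq : q.Prime := hs q (Finset.mem_insert_self q s)
    haveI : Fact q.Prime := ⟨hq⟩
    have hPq : ¬ q ∣ ∏ p ∈ s, p := by
      intro hdvd
      obtain ⟨p, hp, hqp⟩ := (Nat.Prime.prime hq).exists_mem_finset_dvd hdvd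
      exact hqs (((Nat.prime_dvd_prime_iff_eq hq (hs p (Finset.mem_insert_of_mem hp))).mp
        hqp) ▸ hp)
    have hP0 : ((∏ p ∈ s, p : ℕ) : ZMod q) ≠ 0 := by
      rw [Ne, ZMod.natCast_eq_zero_iff]
      exact hPq
    set k : ZMod q := (c q - (u : ZMod q)) * ((∏ p ∈ s, p : ℕ) : ZMod q)⁻¹ with hk
    refine ⟨u + (∏ p ∈ s, p) * k.val, fun p hp => ?_⟩
    rcases Finset.mem_insert.mp hp with rfl | hp'
    · rw [Nat.cast_add, Nat.cast_mul, ZMod.natCast_rightInverse k, hk,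
        mul_comm ((∏ p ∈ s, p : ℕ) : ZMod p), mul_assoc,
        inv_mul_cancel₀ hP0, mul_one, add_sub_cancel]
    · have hpP : (p : ℕ) ∣ (∏ p ∈ s, p) * k.val :=
        Dvd.dvd.mul_right (Finset.dvd_prod_of_mem _ hp') _
      rw [Nat.cast_add,
        show (((∏ p ∈ s, p) * k.val : ℕ) : ZMod p) = 0 from ?_, add_zero]
      · exact hu p hp'
      · rw [ZMod.natCast_eq_zero_iff]
        exact hpP

lemma exists_coprime_in_Ioc (n A L : ℕ) (hn : 0 < n) (hL : 4 ^ n.primeFactors.card < L) :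
    ∃ m ∈ Finset.Ioc A (A + L), Nat.Coprime m n := by
  classical
  set W := Finset.Ioc A (A + L) with hW
  set C := (W.filter fun m => Nat.Coprime m n).card with hC
  suffices hCpos : 0 < C by
    obtain ⟨m, hm⟩ := Finset.card_pos.mp hCpos
    exact ⟨m, (Finset.mem_filter.mp hm).1, (Finset.mem_filter.mp hm).2⟩
  set M : ℕ → ℕ := fun d => (W.filter fun m => d ∣ m).card with hM
  -- Step A : inclusion-exclusion
  have hgcd_div : ∀ m : ℕ, (Nat.gcd m n).divisors = n.divisors.filter (· ∣ m) := by
    intro m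
    ext d
    simp only [Nat.mem_divisors, Finset.mem_filter, Nat.dvd_gcd_iff]
    constructor
    · rintro ⟨⟨h1, h2⟩, -⟩
      exact ⟨⟨h2, hn.ne'⟩, h1⟩
    · rintro ⟨⟨h2, -⟩, h1⟩
      refine ⟨⟨h1, h2⟩, ?_⟩
      simp only [Ne, Nat.gcd_eq_zero_iff, not_and_or]
      exact Or.inr hn.ne'
  have hA : (C : ℤ) = ∑ d ∈ n.divisors, moebius d * (M d : ℤ) := by
    calc (C : ℤ) = ∑ m ∈ W, (if Nat.Coprime m n then (1 : ℤ) else 0) := by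
          rw [hC]; exact (Finset.sum_boole _ _).symm
      _ = ∑ m ∈ W, ∑ d ∈ (Nat.gcd m n).divisors, moebius d := by
          refine Finset.sum_congr rfl fun m _ => ?_
          rw [sum_moebius_divisors (Nat.gcd m n)]
      _ = ∑ m ∈ W, ∑ d ∈ n.divisors, (if d ∣ m then moebius d else 0) := by
          refine Finset.sum_congr rfl fun m _ => ?_
          rw [hgcd_div m, Finset.sum_filter]
      _ = ∑ d ∈ n.divisors, ∑ m ∈ W, (if d ∣ m then moebius d else 0) := Finset.sum_comm
      _ = ∑ d ∈ n.divisors, moebius d * (M d : ℤ) := by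
          refine Finset.sum_congr rfl fun d _ => ?_
          rw [← Finset.sum_filter, Finset.sum_const, hM]
          simp [mul_comm]
  -- Step B : counting multiples
  have hMd : ∀ d, 0 < d → A / d + M d = (A + L) / d := by
    intro d hd
    have hunion : (Finset.Ioc 0 A).filter (fun m => d ∣ m) ∪ W.filter (fun m => d ∣ m)
        = (Finset.Ioc 0 (A + L)).filter (fun m => d ∣ m) := by
      rw [← Finset.filter_union, Finset.Ioc_union_Ioc_eq_Ioc (Nat.zero_le A) (Nat.le_add_right A L)]
    have hdisj : Disjoint ((Finset.Ioc 0 A).filter (fun m => d ∣ m))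
        (W.filter (fun m => d ∣ m)) := by
      apply Finset.disjoint_filter_filter
      rw [Finset.disjoint_left]
      intro m hm1 hm2
      rw [hW] at hm2
      simp only [Finset.mem_Ioc] at hm1 hm2
      omega
    have := Finset.card_union_of_disjoint hdisj
    rw [hunion] at this
    rw [← Nat.Ioc_filter_dvd_card_eq_div, ← Nat.Ioc_filter_dvd_card_eq_div, ← this]
  -- Step C : per-divisor error bounds (in ℤ)
  have hbound : ∀ d ∈ n.divisors, |(d : ℤ) * M d - L| ≤ (d : ℤ) - 1 := by
    intro d hd
    have hd0 : 0 < d := Nat.pos_of_mem_divisors hd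
    have e1 := Nat.div_add_mod A d
    have e2 := Nat.div_add_mod (A + L) d
    have m1 : A % d < d := Nat.mod_lt _ hd0
    have m2 : (A + L) % d < d := Nat.mod_lt _ hd0
    have hsum := hMd d hd0
    have hmul : d * (A / d) + d * M d = d * ((A + L) / d) := by
      rw [← Nat.mul_add, hsum]
    set q1 := A / d with hq1
    set q2 := (A + L) / d with hq2
    set r1 := A % d with hr1
    set r2 := (A + L) % d with hr2
    rw [abs_le]
    constructor
    · have h : L + d * q1 ≤ d * M d + d * q1 + d - 1 := by
        have : d * M d + d * q1 = d * q2 := by omega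
        omega
      have h' := (Nat.cast_le (α := ℤ)).mpr h
      push_cast at h'
      linarith
    · have h : d * M d + d * q1 ≤ L + d * q1 + d - 1 := by
        have : d * M d + d * q1 = d * q2 := by omega
        omega
      have h' := (Nat.cast_le (α := ℤ)).mpr h
      push_cast at h'
      have hd1 : (1 : ℤ) ≤ d := by exact_mod_cast hd0
      linarith
  -- Step D : main identity
  set om := n.primeFactors.card with hom
  set T : ℤ := ∑ d ∈ n.divisors, moebius d * ((n / d : ℕ) : ℤ) * ((d : ℤ) * M d - L) with hT
  have key : (n : ℤ) * C = (L : ℤ) * n.totient + T := by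
    rw [hA, Finset.mul_sum, hT, ← moebius_totient_identity n hn, Finset.mul_sum,
      ← Finset.sum_add_distrib]
    refine Finset.sum_congr rfl fun d hd => ?_
    have hdvd : d ∣ n := Nat.dvd_of_mem_divisors hd
    have hnd : ((n / d : ℕ) : ℤ) * d = n := by
      rw [← Nat.cast_mul, Nat.div_mul_cancel hdvd]
    rw [← hnd]
    ring
  -- Step E : bound the error term
  have hTfilter : T = ∑ d ∈ n.divisors.filter (fun d => Squarefree d ∧ d ≠ 1),
      moebius d * ((n / d : ℕ) : ℤ) * ((d : ℤ) * M d - L) := by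
    rw [hT]
    refine (Finset.sum_filter_of_ne fun d hd hne => ?_).symm
    constructor
    · by_contra hsq
      rw [moebius_eq_zero_of_not_squarefree hsq] at hne
      simp at hne
    · rintro rfl
      have : M 1 = L := by have := hMd 1 one_pos; omega
      rw [this] at hne
      simp at hne
  have hcard : (n.divisors.filter (fun d => Squarefree d ∧ d ≠ 1)).card ≤ 2 ^ om - 1 := by
    have hsub : n.divisors.filter (fun d => Squarefree d ∧ d ≠ 1)
        ⊆ (n.divisors.filter Squarefree).erase 1 := by
      intro d hd
      simp only [Finset.mem_filter, Finset.mem_erase] at *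
      tauto
    have h1mem : (1 : ℕ) ∈ n.divisors.filter Squarefree := by
      simp [Nat.mem_divisors, hn.ne', squarefree_one]
    calc (n.divisors.filter (fun d => Squarefree d ∧ d ≠ 1)).card
        ≤ ((n.divisors.filter Squarefree).erase 1).card := Finset.card_le_card hsub
      _ = (n.divisors.filter Squarefree).card - 1 := Finset.card_erase_of_mem h1mem
      _ = 2 ^ om - 1 := by rw [card_squarefree_divisors n hn.ne', hom]
  have hTbound : |T| ≤ ((2 ^ om - 1 : ℕ) : ℤ) * n := by
    rw [hTfilter]
    calc |∑ d ∈ n.divisors.filter (fun d => Squarefree d ∧ d ≠ 1),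
          moebius d * ((n / d : ℕ) : ℤ) * ((d : ℤ) * M d - L)|
        ≤ ∑ d ∈ n.divisors.filter (fun d => Squarefree d ∧ d ≠ 1),
          |moebius d * ((n / d : ℕ) : ℤ) * ((d : ℤ) * M d - L)| := Finset.abs_sum_le_sum_abs _ _
      _ ≤ ∑ _d ∈ n.divisors.filter (fun d => Squarefree d ∧ d ≠ 1), (n : ℤ) := by
          refine Finset.sum_le_sum fun d hd => ?_
          have hd' : d ∈ n.divisors := (Finset.mem_filter.mp hd).1
          have hdvd : d ∣ n := Nat.dvd_of_mem_divisors hd'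
          have hd0 : 0 < d := Nat.pos_of_mem_divisors hd'
          rw [abs_mul, abs_mul]
          have h1 : |(moebius d : ℤ)| ≤ 1 := abs_moebius_le_one
          have h2 : |((n / d : ℕ) : ℤ)| = ((n / d : ℕ) : ℤ) := abs_of_nonneg (by positivity)
          have h3 := hbound d hd'
          have h4 : ((n / d : ℕ) : ℤ) * ((d : ℤ) - 1) ≤ n := by
            have : (n / d) * d = n := Nat.div_mul_cancel hdvd
            have hc : ((n / d : ℕ) : ℤ) * d = n := by exact_mod_cast this
            nlinarith [Nat.cast_nonneg (α := ℤ) (n / d)]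
          have h5 : |(moebius d : ℤ)| * |((n / d : ℕ) : ℤ)| ≤ 1 * ((n / d : ℕ) : ℤ) :=
            mul_le_mul h1 (le_of_eq h2) (abs_nonneg _) one_pos.le
          calc |(moebius d : ℤ)| * |((n / d : ℕ) : ℤ)| * |(d : ℤ) * M d - L|
              ≤ 1 * ((n / d : ℕ) : ℤ) * ((d : ℤ) - 1) :=
                mul_le_mul h5 h3 (abs_nonneg _) (by positivity)
            _ ≤ n := by rw [one_mul]; exact h4
      _ = ((n.divisors.filter (fun d => Squarefree d ∧ d ≠ 1)).card : ℤ) * n := by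
          rw [Finset.sum_const, nsmul_eq_mul]
      _ ≤ ((2 ^ om - 1 : ℕ) : ℤ) * n := by
          apply mul_le_mul_of_nonneg_right _ (by positivity)
          exact_mod_cast hcard
  -- Step F : conclude
  have hphi : 0 < n.totient := Nat.totient_pos.mpr hn
  have htot := totient_two_pow_card n
  have hbig : ((2 ^ om - 1 : ℕ) : ℤ) * n < (L : ℤ) * n.totient := by
    have h1 : (4 ^ om + 1 : ℕ) ≤ L := hL
    have h2 : n ≤ n.totient * 2 ^ om := by rw [hom]; exact htot
    have h3 : ((4 ^ om + 1 : ℕ) : ℤ) * n.totient ≤ (L : ℤ) * n.totient := by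
      apply mul_le_mul_of_nonneg_right _ (by positivity)
      exact_mod_cast h1
    have h4 : ((2 ^ om - 1 : ℕ) : ℤ) * n < ((4 ^ om + 1 : ℕ) : ℤ) * n.totient := by
      have h2' : (n : ℤ) ≤ (n.totient : ℤ) * 2 ^ om := by exact_mod_cast h2
      have hphi' : (1 : ℤ) ≤ n.totient := by exact_mod_cast hphi
      have hn' : (1 : ℤ) ≤ n := by exact_mod_cast hn
      have hcast : ((2 ^ om - 1 : ℕ) : ℤ) = 2 ^ om - 1 := by
        have : (1 : ℕ) ≤ 2 ^ om := Nat.one_le_two_pow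
        push_cast [this]
        ring
      rw [hcast]
      push_cast
      have hfour : ((4 : ℤ)) ^ om = 2 ^ om * 2 ^ om := by
        rw [← mul_pow]; norm_num
      nlinarith [pow_pos (show (0:ℤ) < 2 by norm_num) om]
    linarith
  by_contra h0
  have hC0 : C = 0 := by omega
  rw [hC0] at key
  simp only [Nat.cast_zero, mul_zero] at key
  have : (L : ℤ) * n.totient = -T := by linarith
  have habs : (L : ℤ) * n.totient ≤ |T| := by
    rw [this]
    exact (neg_le_abs T)
  linarith

lemma exists_coprime_rep (a b n : ℕ) (ha : 1 < a) (hab : a < b) (hco : Nat.Coprime a b)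
    (hn : 2 ^ 30 * (a * b) ^ 2 < n) :
    ∃ x y : ℕ, a * x + b * y = n ∧ Nat.gcd x y = 1 := by
  classical
  have hb : 1 < b := lt_trans ha hab
  have hb0 : 0 < b := by omega
  have ha0 : 0 < a := by omega
  have hn0 : 0 < n := by
    have : (0:ℕ) < 2 ^ 30 * (a * b) ^ 2 := by positivity
    omega
  haveI : NeZero b := ⟨by omega⟩
  -- base representation
  set x₀ : ℕ := ((n : ZMod b) * (a : ZMod b)⁻¹).val with hx₀
  have hx₀lt : x₀ < b := ZMod.val_lt _
  have hax₀ : ((a * x₀ : ℕ) : ZMod b) = (n : ZMod b) := by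
    rw [Nat.cast_mul, hx₀, ZMod.natCast_rightInverse _, ← mul_assoc, mul_comm (a : ZMod b),
      mul_assoc, ZMod.coe_mul_inv_eq_one a hco, mul_one]
  have hab1 : 1 ≤ a * b := Nat.one_le_iff_ne_zero.mpr (Nat.mul_ne_zero (by omega) (by omega))
  have habn : a * b ≤ 2 ^ 30 * (a * b) ^ 2 := by
    calc a * b = (a * b) * 1 := (mul_one _).symm
      _ ≤ (a * b) * (a * b) := Nat.mul_le_mul_left _ hab1
      _ = 1 * (a * b) ^ 2 := by ring
      _ ≤ 2 ^ 30 * (a * b) ^ 2 := Nat.mul_le_mul_right _ (by norm_num)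
  have hax₀le : a * x₀ ≤ n := by
    have h1 : a * x₀ < a * b := mul_lt_mul_of_pos_left hx₀lt ha0
    omega
  have hdvd : b ∣ n - a * x₀ := by
    rw [← ZMod.natCast_eq_zero_iff, Nat.cast_sub hax₀le, hax₀, sub_self]
  have hbase : a * x₀ + b * ((n - a * x₀) / b) = n := by
    rw [Nat.mul_div_cancel' hdvd]
    omega
  set y₀ : ℕ := (n - a * x₀) / b with hy₀def
  have hby₀ : b * y₀ = n - a * x₀ := Nat.mul_div_cancel' hdvd
  -- window size
  set S : ℕ := n / (2 * (a * b)) with hSdef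
  have hS1 : 2 * (a * b) * S ≤ n := by
    rw [hSdef, mul_comm]
    exact Nat.div_mul_le_self n (2 * (a * b))
  have hS2 : n < 2 * (a * b) * (S + 1) := by
    rw [hSdef]
    exact Nat.lt_mul_div_succ n (by omega)
  have hSk : 2 ^ 29 * (a * b) ≤ S := by
    rw [hSdef]
    rw [Nat.le_div_iff_mul_le (by omega : 0 < 2 * (a * b))]
    calc 2 ^ 29 * (a * b) * (2 * (a * b)) = 2 ^ 30 * (a * b) ^ 2 := by ring
      _ ≤ n := hn.le
  have hS1' : 1 ≤ S := le_trans (by nlinarith) hSk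
  -- the key size condition : 4 ^ ω < S
  have hLS : 4 ^ n.primeFactors.card < S := by
    have h16 : 16 ^ n.primeFactors.card ≤ 16 ^ 6 * n := sixteen_pow_card_le n hn0.ne'
    have hsq : 16 ^ 6 * n < S * S := by
      have h1 : n < 4 * (a * b) * S := by
        have : 2 * (a * b) * (S + 1) ≤ 4 * (a * b) * S := by nlinarith
        omega
      calc 16 ^ 6 * n < 16 ^ 6 * (4 * (a * b) * S) :=
            mul_lt_mul_of_pos_left h1 (by norm_num)
        _ = (2 ^ 26 * (a * b)) * S := by ring
        _ ≤ S * S := by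
            apply Nat.mul_le_mul_right
            calc 2 ^ 26 * (a * b) ≤ 2 ^ 29 * (a * b) := by
                  apply Nat.mul_le_mul_right; norm_num
              _ ≤ S := hSk
    by_contra hcon
    push_neg at hcon
    have : S * S ≤ 16 ^ n.primeFactors.card := by
      calc S * S ≤ 4 ^ n.primeFactors.card * 4 ^ n.primeFactors.card :=
            Nat.mul_le_mul hcon hcon
        _ = 16 ^ n.primeFactors.card := by rw [← mul_pow]; norm_num
    omega
  -- classes to avoid
  set c : (p : ℕ) → ZMod p := fun p =>
    if (b : ZMod p) = 0 then (y₀ : ZMod p) * (a : ZMod p)⁻¹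
    else (-(x₀ : ZMod p)) * (b : ZMod p)⁻¹ with hc
  obtain ⟨u, hu⟩ := crt_exists n.primeFactors
    (fun p hp => Nat.prime_of_mem_primeFactors hp) c
  set r : ℕ := ∏ p ∈ n.primeFactors, p with hr
  have hr0 : 0 < r := Finset.prod_pos fun p hp => (Nat.prime_of_mem_primeFactors hp).pos
  set K : ℕ := r * (u / r + 1) with hK
  have hKu : u < K := by
    rw [hK]
    calc u < r * (u / r) + r := by
          have := Nat.div_add_mod u r
          have := Nat.mod_lt u hr0
          omega
      _ = r * (u / r + 1) := by ring
  obtain ⟨m, hmW, hmcop⟩ := exists_coprime_in_Ioc n (K - u) S hn0 hLS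
  rw [Finset.mem_Ioc] at hmW
  set t : ℕ := m - (K - u) with ht
  have hmt : m = (K - u) + t := by omega
  have ht1 : 1 ≤ t := by omega
  have htS : t ≤ S := by omega
  -- validity of the representation
  have haty₀ : a * t ≤ y₀ := by
    have h1 : b * (a * t) ≤ b * y₀ := by
      rw [hby₀]
      calc b * (a * t) ≤ b * (a * S) := by
            apply Nat.mul_le_mul_left
            exact Nat.mul_le_mul_left _ htS
        _ = a * b * S := by ring
        _ ≤ n - a * b := by
            have h2 : a * b * S + a * b ≤ 2 * (a * b) * S := by nlinarith
            omega
        _ ≤ n - a * x₀ := by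
            have h1 : a * x₀ < a * b := mul_lt_mul_of_pos_left hx₀lt ha0
            omega
    exact Nat.le_of_mul_le_mul_left h1 hb0
  have hrep : a * (x₀ + b * t) + b * (y₀ - a * t) = n := by
    have hy : (y₀ - a * t) + a * t = y₀ := Nat.sub_add_cancel haty₀
    have key : a * (x₀ + b * t) + b * (y₀ - a * t) + b * (a * t)
        = n + b * (a * t) := by
      calc a * (x₀ + b * t) + b * (y₀ - a * t) + b * (a * t)
          = a * x₀ + b * ((y₀ - a * t) + a * t) + a * (b * t) := by ring
        _ = a * x₀ + b * y₀ + a * (b * t) := by rw [hy]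
        _ = n + b * (a * t) := by
            rw [hy₀def, hbase]; ring
    omega
  refine ⟨x₀ + b * t, y₀ - a * t, hrep, ?_⟩
  by_contra hg
  have hbt : 1 ≤ b * t := Nat.one_le_iff_ne_zero.mpr
    (Nat.mul_ne_zero (by omega) (by omega))
  have hgcd0 : Nat.gcd (x₀ + b * t) (y₀ - a * t) ≠ 0 := by
    rw [Ne, Nat.gcd_eq_zero_iff]
    rintro ⟨h1, -⟩
    omega
  set p : ℕ := (Nat.gcd (x₀ + b * t) (y₀ - a * t)).minFac with hpdef
  have hp : p.Prime := Nat.minFac_prime (by omega)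
  have hpx : p ∣ x₀ + b * t := (Nat.minFac_dvd _).trans (Nat.gcd_dvd_left _ _)
  have hpy : p ∣ y₀ - a * t := (Nat.minFac_dvd _).trans (Nat.gcd_dvd_right _ _)
  have hpn : p ∣ n := by
    rw [← hrep]
    exact Nat.dvd_add (hpx.mul_left a) (hpy.mul_left b)
  have hpf : p ∈ n.primeFactors := Nat.mem_primeFactors.mpr ⟨hp, hpn, hn0.ne'⟩
  haveI : Fact p.Prime := ⟨hp⟩
  have hpK : (p : ℕ) ∣ K := by
    rw [hK]
    exact (Finset.dvd_prod_of_mem _ hpf).mul_right _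
  have htc : (t : ZMod p) = c p := by
    by_cases hbp : (b : ZMod p) = 0
    · have hap : (a : ZMod p) ≠ 0 := by
        intro h0
        have hpa : p ∣ a := (ZMod.natCast_eq_zero_iff a p).mp h0
        have hpb : p ∣ b := (ZMod.natCast_eq_zero_iff b p).mp hbp
        exact hp.one_lt.ne' (Nat.dvd_one.mp (hco.gcd_eq_one ▸ Nat.dvd_gcd hpa hpb))
      have hyz : ((y₀ - a * t : ℕ) : ZMod p) = 0 :=
        (ZMod.natCast_eq_zero_iff _ p).mpr hpy
      rw [Nat.cast_sub haty₀] at hyz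
      have h5 : (a : ZMod p) * t = (y₀ : ZMod p) := by
        have h6 := (eq_of_sub_eq_zero hyz).symm
        rw [Nat.cast_mul] at h6
        exact h6
      rw [hc]
      simp only [if_pos hbp]
      calc (t : ZMod p) = ((a : ZMod p) * t) * (a : ZMod p)⁻¹ := by
            field_simp
          _ = (y₀ : ZMod p) * (a : ZMod p)⁻¹ := by rw [h5]
    · have hxz : ((x₀ + b * t : ℕ) : ZMod p) = 0 :=
        (ZMod.natCast_eq_zero_iff _ p).mpr hpx
      rw [Nat.cast_add, Nat.cast_mul] at hxz
      have h5 : (b : ZMod p) * t = -(x₀ : ZMod p) :=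
        eq_neg_of_add_eq_zero_right hxz
      rw [hc]
      simp only [if_neg hbp]
      calc (t : ZMod p) = ((b : ZMod p) * t) * (b : ZMod p)⁻¹ := by
            field_simp
          _ = (-(x₀ : ZMod p)) * (b : ZMod p)⁻¹ := by rw [h5]
  have hm0 : (m : ZMod p) = 0 := by
    have hK0 : (K : ZMod p) = 0 := (ZMod.natCast_eq_zero_iff K p).mpr hpK
    rw [hmt, Nat.cast_add, Nat.cast_sub hKu.le, hK0, htc, ← hu p hpf]
    ring
  have hpm : p ∣ m := (ZMod.natCast_eq_zero_iff m p).mp hm0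
  have : p ∣ 1 := hmcop.gcd_eq_one ▸ Nat.dvd_gcd hpm hpn
  exact hp.one_lt.ne' (Nat.dvd_one.mp this)

/-- `G a₁ a₂` is the least nonnegative integer such that every integer strictly greater than
it can be written as `a₁ * x₁ + a₂ * x₂` with `x₁, x₂` nonnegative integers satisfying
`gcd (x₁, x₂) = 1`. -/
noncomputable def coprimeFrobenius (a₁ a₂ : ℕ) : ℕ :=
  sInf {N : ℕ | ∀ n : ℕ, N < n →
    ∃ x₁ x₂ : ℕ, a₁ * x₁ + a₂ * x₂ = n ∧ Nat.gcd x₁ x₂ = 1}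

/-- Let `1 < a₁ < a₂` be coprime integers. Then `a₁ * a₂ ≤ G_{a₁,a₂}`. -/
theorem coprimeFrobenius_lower_bound (a₁ a₂ : ℕ) (h₁ : 1 < a₁) (h₂ : a₁ < a₂)
    (hco : Nat.gcd a₁ a₂ = 1) :
    a₁ * a₂ ≤ coprimeFrobenius a₁ a₂ := by
  have hcop : Nat.Coprime a₁ a₂ := hco
  apply le_csInf
  · exact ⟨2 ^ 30 * (a₁ * a₂) ^ 2,
      fun n hn => exists_coprime_rep a₁ a₂ n h₁ h₂ hcop hn⟩
  · intro N hN
    by_contra hlt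
    push_neg at hlt
    obtain ⟨x, y, hxy, hg⟩ := hN (a₁ * a₂) hlt
    have hd1 : a₁ ∣ a₂ * y := by
      have h1 : a₂ * y = a₁ * a₂ - a₁ * x := by omega
      rw [h1]
      exact Nat.dvd_sub (Dvd.intro _ rfl) (Dvd.intro _ rfl)
    obtain ⟨c, rfl⟩ := hcop.dvd_of_dvd_mul_left hd1
    have hmul : a₁ * (x + a₂ * c) = a₁ * a₂ := by
      calc a₁ * (x + a₂ * c) = a₁ * x + a₂ * (a₁ * c) := by ring
        _ = a₁ * a₂ := hxy
    have hsum : x + a₂ * c = a₂ := Nat.eq_of_mul_eq_mul_left (by omega) hmul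
    rcases Nat.eq_zero_or_pos c with rfl | hc
    · rw [mul_zero, Nat.gcd_zero_right] at hg
      omega
    · have h2 : a₂ ≤ a₂ * c := Nat.le_mul_of_pos_right _ hc
      have hx0 : x = 0 := by omega
      have hac : a₂ * c = a₂ * 1 := by omega
      have hc1 : c = 1 := Nat.eq_of_mul_eq_mul_left (by omega) hac
      rw [hx0, hc1, mul_one, Nat.gcd_zero_left] at hg
      omega
end

section
/- Let a_1 > 2 be a fixed integer. Then there exists a constant c_1 > 0 (depending only on a_1) such that for every real M there exists an integer a_2 > M with gcd(a_1, a_2) = 1, a_2 > a_1, and G_{a_1,a_2} > c_1 · a_2 · log a_2. -/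
open Finset

lemma big_pow : ∀ k : ℕ, 20 ≤ k → 1024 * k ≤ 2 ^ k := by
  intro k hk
  induction k, hk using Nat.le_induction with
  | base => norm_num
  | succ m hm ih =>
    have h2 : 1024 ≤ 2 ^ m := le_trans (by nlinarith) ih
    rw [pow_succ]
    omega

lemma card_class (J q : ℕ) (hq : 0 < q) (c : ZMod q) :
    ((Finset.range (J + 1)).filter (fun (j : ℕ) => ((j : ZMod q) = c))).card ≤ J / q + 1 := by
  have h := Finset.card_le_card_of_injOn (s := (Finset.range (J + 1)).filter
      (fun (j : ℕ) => ((j : ZMod q) = c))) (t := Finset.range (J / q + 1)) (fun j => j / q) ?_ ?_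
  · simpa using h
  · intro j hj
    rw [Finset.mem_coe, Finset.mem_filter, Finset.mem_range] at hj
    rw [Finset.mem_coe, Finset.mem_range]
    exact Nat.lt_succ_of_le (Nat.div_le_div_right (by omega))
  · intro j hj j' hj' hdiv
    simp only [Finset.coe_filter, Set.mem_setOf_eq, Finset.mem_range] at hj hj'
    have hmod : j % q = j' % q := by
      have := (ZMod.natCast_eq_natCast_iff j j' q).mp (hj.2.trans hj'.2.symm)
      exact this
    simp only at hdiv
    have e1 := Nat.div_add_mod j q
    have e2 := Nat.div_add_mod j' q
    rw [hdiv, hmod] at e1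
    exact e1.symm.trans e2


/-- Sieve lemma: one can pick `i ≤ K` avoiding, for every prime `q` dividing `n`,
a prescribed residue class `T q` modulo `q`, provided `K` is a bit bigger than `√n`. -/
lemma sieve_avoid (n K : ℕ) (hn0 : n ≠ 0) (T : ℕ → ℕ)
    (hl : 2 ^ 19 ≤ Nat.log 2 n)
    (hK : 2 ^ (Nat.log 2 n / 8) * 2 ^ (Nat.log 2 n / 2) ≤ K) :
    ∃ i, i ≤ K ∧ ∀ q : ℕ, q.Prime → q ∣ n → ((i : ZMod q) ≠ (T q : ZMod q)) := by
  classical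
  set l := Nat.log 2 n with hl_def
  set β := l / 4 with hβ_def
  have hβ : 2 ^ 16 ≤ β := by
    have : 2 ^ 19 / 4 ≤ l / 4 := Nat.div_le_div_right hl
    simpa using le_trans (by norm_num) this
  set D₀ := n.primeFactors.filter (fun q => q ≤ β) with hD₀_def
  set D₁ := n.primeFactors.filter (fun q => β < q) with hD₁_def
  have hD₀p : ∀ q ∈ D₀, q.Prime := fun q hq => Nat.prime_of_mem_primeFactors (mem_filter.mp hq).1
  have hD₁p : ∀ q ∈ D₁, q.Prime := fun q hq => Nat.prime_of_mem_primeFactors (mem_filter.mp hq).1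
  set m₀ := ∏ q ∈ D₀, q with hm₀_def
  have hm₀pos : 0 < m₀ := Finset.prod_pos (fun q hq => (hD₀p q hq).pos)
  have hm₀ : m₀ ≤ 2 ^ (l / 2) := by
    have h1 : m₀ ≤ primorial β := by
      apply Finset.prod_le_prod_of_subset_of_one_le'
      · intro q hq
        rw [Finset.mem_filter] at hq ⊢
        exact ⟨Finset.mem_range.mpr (Nat.lt_succ_of_le hq.2), Nat.prime_of_mem_primeFactors hq.1⟩
      · intro q hq _
        exact Nat.one_le_iff_ne_zero.mpr ((mem_filter.mp hq).2.pos.ne')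
    have h2 : primorial β ≤ 4 ^ β := primorial_le_4_pow β
    have h3 : (4 : ℕ) ^ β = 2 ^ (2 * β) := by rw [pow_mul]; norm_num
    have h4 : 2 * β ≤ l / 2 := by rw [hβ_def]; omega
    calc m₀ ≤ 4 ^ β := h1.trans h2
      _ = 2 ^ (2 * β) := h3
      _ ≤ 2 ^ (l / 2) := Nat.pow_le_pow_right (by norm_num) h4
  -- CRT choice of i₀
  have hcrt : ∃ x : ℕ, ∀ q ∈ D₀, x ≡ T q + 1 [MOD q] := by
    have hmod : ∀ q ∈ D₀, (id q : ℕ) ≠ 0 := fun q hq => (hD₀p q hq).pos.ne'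
    have pp : Set.Pairwise D₀ (Function.onFun Nat.Coprime id) := by
      intro p hp' q hq' hne
      exact (Nat.coprime_primes (hD₀p p hp') (hD₀p q hq')).mpr hne
    obtain ⟨k, hk⟩ := Nat.chineseRemainderOfFinset (fun q => T q + 1) id D₀ hmod pp
    exact ⟨k, hk⟩
  obtain ⟨x, hx⟩ := hcrt
  set i₀ := x % m₀ with hi₀_def
  have hi₀lt : i₀ < m₀ := Nat.mod_lt x hm₀pos
  have hi₀q : ∀ q ∈ D₀, i₀ ≡ T q + 1 [MOD q] := by
    intro q hq
    have hdq : q ∣ m₀ := Finset.dvd_prod_of_mem _ hq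
    have : i₀ ≡ x [MOD q] := by
      rw [hi₀_def, Nat.ModEq]
      exact Nat.mod_mod_of_dvd x hdq
    exact this.trans (hx q hq)
  have hm₀q : ∀ q ∈ D₁, ¬ (q ∣ m₀) := by
    intro q hq hdq
    have hqp := hD₁p q hq
    obtain ⟨p, hpD, hqp'⟩ := hqp.prime.exists_mem_finset_dvd hdq
    have hpp := hD₀p p hpD
    have : q = p := (Nat.prime_dvd_prime_iff_eq hqp hpp).mp hqp'
    have h1 := (mem_filter.mp hq).2
    have h2 := (mem_filter.mp hpD).2
    omega
  set L := Nat.log (β + 1) n with hL_def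
  have hL16 : 16 * L ≤ l := by
    have h1 : (β + 1) ^ L ≤ n := Nat.pow_log_le_self (β + 1) hn0
    have h2 : (2 ^ 16) ^ L ≤ (β + 1) ^ L := Nat.pow_le_pow_left (by omega) L
    have h3 : 2 ^ (16 * L) ≤ n := by rw [pow_mul]; exact h2.trans h1
    exact (Nat.le_log_iff_pow_le (by norm_num) hn0).mpr h3 |>.trans_eq' (by ring_nf)
  set J := (K - i₀) / m₀ with hJ_def
  have hJL : 2 * L + 2 ≤ J := by
    have hL4 : 2 * L + 3 ≤ 2 ^ (l / 8) := by
      have hk20 : 20 ≤ l / 8 := by omega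
      have := big_pow (l / 8) hk20
      omega
    have h5 : (2 * L + 3) * m₀ ≤ 2 ^ (l / 8) * 2 ^ (l / 2) := Nat.mul_le_mul hL4 hm₀
    rw [hJ_def]
    apply Nat.le_div_iff_mul_le hm₀pos |>.mpr
    have : (2 * L + 2) * m₀ + m₀ = (2 * L + 3) * m₀ := by ring
    omega
  have hβL : 2 * L + 2 ≤ β + 1 := by omega
  have hiK : ∀ j, j ≤ J → i₀ + m₀ * j ≤ K := by
    intro j hj
    have h1 : m₀ * j ≤ m₀ * J := Nat.mul_le_mul_left m₀ hj
    have h2 : m₀ * J ≤ K - i₀ := by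
      rw [hJ_def]
      exact Nat.mul_div_le _ _ |>.trans_eq' (by ring)
    have h3 : i₀ ≤ K := by
      by_contra hcon
      push_neg at hcon
      have : K - i₀ = 0 := by omega
      rw [hJ_def, this, Nat.zero_div] at hJL
      omega
    omega
  have hD₁L : D₁.card ≤ L := by
    have h1 : (β + 1) ^ D₁.card ≤ ∏ q ∈ D₁, q := by
      apply Finset.pow_card_le_prod
      intro q hq
      have := (mem_filter.mp hq).2
      omega
    have h2 : (∏ q ∈ D₁, q) ∣ n := by
      refine dvd_trans ?_ (Nat.prod_primeFactors_dvd n)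
      exact Finset.prod_dvd_prod_of_subset _ _ _ (Finset.filter_subset _ _)
    have h3 : (β + 1) ^ D₁.card ≤ n := h1.trans (Nat.le_of_dvd (Nat.pos_of_ne_zero hn0) h2)
    exact (Nat.le_log_iff_pow_le (by omega) hn0).mpr h3
  have hD₁gt : ∀ q ∈ D₁, β < q := fun q hq => (mem_filter.mp hq).2
  have hD₀mem : ∀ q : ℕ, q.Prime → q ∣ n → q ≤ β → q ∈ D₀ := by
    intro q hq hdvd hle
    rw [hD₀_def, mem_filter]
    exact ⟨Nat.mem_primeFactors.mpr ⟨hq, hdvd, hn0⟩, hle⟩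
  have hD₁mem : ∀ q : ℕ, q.Prime → q ∣ n → β < q → q ∈ D₁ := by
    intro q hq hdvd hle
    rw [hD₁_def, mem_filter]
    exact ⟨Nat.mem_primeFactors.mpr ⟨hq, hdvd, hn0⟩, hle⟩
  have hdm₀ : ∀ q ∈ D₀, q ∣ m₀ := fun q hq => Finset.dvd_prod_of_mem _ hq
  set BadJ := (range (J + 1)).filter
      (fun (j : ℕ) => ∃ q ∈ D₁, (((i₀ + m₀ * j : ℕ) : ZMod q) = (T q : ZMod q))) with hBadJ_def
  have hcard : BadJ.card ≤ L * (J / (2 * L + 2) + 1) := by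
    have hsub : BadJ ⊆ D₁.biUnion (fun q => (range (J + 1)).filter
        (fun (j : ℕ) => ((j : ZMod q) = ((T q : ZMod q) - (i₀ : ZMod q)) * (m₀ : ZMod q)⁻¹))) := by
      intro j hj
      rw [hBadJ_def, Finset.mem_filter] at hj
      obtain ⟨hjr, q, hqD, hbad⟩ := hj
      rw [Finset.mem_biUnion]
      refine ⟨q, hqD, ?_⟩
      rw [Finset.mem_filter]
      refine ⟨hjr, ?_⟩
      have hqp := hD₁p q hqD
      haveI := Fact.mk hqp
      push_cast at hbad
      have hm : (m₀ : ZMod q) ≠ 0 := by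
        rw [Ne, ZMod.natCast_eq_zero_iff]
        exact hm₀q q hqD
      rw [eq_mul_inv_iff_mul_eq₀ hm]
      linear_combination hbad
    calc BadJ.card ≤ _ := Finset.card_le_card hsub
      _ ≤ ∑ q ∈ D₁, ((range (J + 1)).filter
          (fun (j : ℕ) => ((j : ZMod q) = ((T q : ZMod q) - (i₀ : ZMod q)) * (m₀ : ZMod q)⁻¹))).card :=
        Finset.card_biUnion_le
      _ ≤ ∑ _q ∈ D₁, (J / (2 * L + 2) + 1) := by
        apply Finset.sum_le_sum
        intro q hq
        have h1 := card_class J q (hD₁p q hq).pos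
          (((T q : ZMod q) - (i₀ : ZMod q)) * (m₀ : ZMod q)⁻¹)
        have h2 : J / q ≤ J / (2 * L + 2) := by
          apply Nat.div_le_div_left ?_ (by omega)
          have := hD₁gt q hq
          omega
        omega
      _ = D₁.card * (J / (2 * L + 2) + 1) := by
        rw [Finset.sum_const, smul_eq_mul]
      _ ≤ L * (J / (2 * L + 2) + 1) := Nat.mul_le_mul_right (J / (2 * L + 2) + 1) hD₁L
  clear_value BadJ J L i₀ m₀ D₁ D₀ β l
  have hgood : ∃ j, j ∈ range (J + 1) ∧ j ∉ BadJ := by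
    have hclt : BadJ.card < (range (J + 1)).card := by
      rw [Finset.card_range]
      have hd : (J / (2 * L + 2)) * (2 * L + 2) ≤ J := Nat.div_mul_le_self J _
      have h3 : 2 * (L * (J / (2 * L + 2) + 1)) ≤ (2 * L + 2) * (J / (2 * L + 2) + 1) := by
        nlinarith [Nat.zero_le (J / (2 * L + 2))]
      have h4 : (2 * L + 2) * (J / (2 * L + 2) + 1)
          = (J / (2 * L + 2)) * (2 * L + 2) + (2 * L + 2) := by ring
      linarith [hcard, hd, hJL, h3, h4]
    by_contra hcon
    push_neg at hcon
    have := Finset.card_le_card (fun j (hj : j ∈ range (J + 1)) => hcon j hj)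
    omega
  obtain ⟨j, hjmem, hjbad⟩ := hgood
  have hjJ : j ≤ J := by have := Finset.mem_range.mp hjmem; omega
  refine ⟨i₀ + m₀ * j, hiK j hjJ, ?_⟩
  intro q hq hqn heq
  rcases le_or_gt q β with hle | hgt
  · have hqD₀ := hD₀mem q hq hqn hle
    haveI := Fact.mk hq
    have h2' : (i₀ : ZMod q) = ((T q + 1 : ℕ) : ZMod q) :=
      (ZMod.natCast_eq_natCast_iff _ _ _).mpr (hi₀q q hqD₀)
    have hm0 : ((m₀ : ℕ) : ZMod q) = 0 :=
      (ZMod.natCast_eq_zero_iff _ _).mpr (hdm₀ q hqD₀)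
    push_cast at heq h2'
    have hone : (1 : ZMod q) = 0 := by
      linear_combination heq - h2' - (j : ZMod q) * hm0
    exact one_ne_zero hone
  · have hqD₁ := hD₁mem q hq hqn hgt
    apply hjbad
    rw [hBadJ_def, Finset.mem_filter]
    exact ⟨hjmem, q, hqD₁, heq⟩

/-- Every large enough integer is `a₁x₁+a₂x₂` with coprime nonnegative `x₁, x₂`. -/
lemma exists_coprime_rep_s11 (a₁ a₂ : ℕ) (ha₁ : 2 ≤ a₁) (ha₂ : 2 ≤ a₂)
    (hco : Nat.Coprime a₁ a₂) :
    ∀ n : ℕ, 2 ^ (2 ^ 19 + 8 * a₁ * a₂) < n →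
      ∃ x₁ x₂ : ℕ, a₁ * x₁ + a₂ * x₂ = n ∧ Nat.gcd x₁ x₂ = 1 := by
  intro n hn
  classical
  have hn0 : n ≠ 0 := (lt_of_le_of_lt (Nat.zero_le _) hn).ne'
  set l := Nat.log 2 n with hl_def
  have hl : 2 ^ 19 + 8 * a₁ * a₂ ≤ l := by
    rw [hl_def]
    exact (Nat.le_log_iff_pow_le (by norm_num) hn0).mpr hn.le
  have h2l : 2 ^ l ≤ n := Nat.pow_log_le_self 2 hn0
  have hllarge : 2 ^ 19 ≤ l := by omega
  -- inverse of a₂ mod a₁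
  set b := a₂ ^ (Nat.totient a₁ - 1) with hb_def
  have hab : a₂ * b ≡ 1 [MOD a₁] := by
    have ht : 1 ≤ Nat.totient a₁ := Nat.totient_pos.mpr (by omega)
    have : a₂ * b = a₂ ^ Nat.totient a₁ := by
      rw [hb_def, ← pow_succ']
      congr 1
      omega
    rw [this]
    exact Nat.ModEq.pow_totient hco.symm
  set r'' := (n * b) % a₁ with hr''_def
  set r' := if r'' = 0 then a₁ else r'' with hr'_def
  have hr'1 : 1 ≤ r' := by rw [hr'_def]; split <;> omega
  have hr'a : r' ≤ a₁ := by
    have : r'' < a₁ := Nat.mod_lt _ (by omega)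
    rw [hr'_def]; split <;> omega
  have hr'cong : a₂ * r' ≡ n [MOD a₁] := by
    have h1 : r' ≡ r'' [MOD a₁] := by
      rw [hr'_def]; split
      · rename_i h; rw [h]; exact (Nat.modEq_zero_iff_dvd).mpr dvd_rfl
      · rfl
    have h2 : r'' ≡ n * b [MOD a₁] := Nat.mod_modEq _ _
    calc a₂ * r' ≡ a₂ * (n * b) [MOD a₁] := (h1.trans h2).mul_left a₂
      _ = (a₂ * b) * n := by ring
      _ ≡ 1 * n [MOD a₁] := hab.mul_right n
      _ = n := by ring
  have hbig : 2 * a₁ * a₂ + a₁ * a₂ + 4 ≤ n := by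
    have h1 : 8 * a₁ * a₂ ≤ l := by omega
    have h2 : l < 2 ^ l := Nat.lt_two_pow_self (n := l)
    nlinarith
  have hr'n : a₂ * r' ≤ n := by nlinarith
  have hdvd : a₁ ∣ n - a₂ * r' := (Nat.modEq_iff_dvd' hr'n).mp hr'cong
  set A := (n - a₂ * r') / a₁ with hA_def
  have hA : a₁ * A + a₂ * r' = n := by
    rw [hA_def, Nat.mul_div_cancel' hdvd]
    omega
  set K := n / (2 * a₁ * a₂) with hK_def
  have hKA : a₂ * K ≤ A := by
    have h1 : 2 * a₁ * a₂ * K ≤ n := Nat.div_mul_le_self n (2 * a₁ * a₂) |>.trans_eq' (by ring)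
    nlinarith
  -- the forbidden residue classes
  set Bad : ℕ → ℕ → Prop := fun q i => q ∣ (r' + a₁ * i) ∧ q ∣ (A - a₂ * i) with hBad_def
  have key : ∀ q : ℕ, q.Prime → ∀ i i' : ℕ, i ≤ K → i' ≤ K → Bad q i → Bad q i' →
      (i : ZMod q) = (i' : ZMod q) := by
    intro q hq i i' hi hi' hbi hbi'
    haveI := Fact.mk hq
    obtain ⟨h1, h2⟩ := hbi
    obtain ⟨h1', h2'⟩ := hbi'
    have hle : a₂ * i ≤ A := le_trans (Nat.mul_le_mul_left a₂ hi) hKA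
    have hle' : a₂ * i' ≤ A := le_trans (Nat.mul_le_mul_left a₂ hi') hKA
    have e1 : ((r' : ZMod q) + a₁ * i) = 0 := by
      have := (ZMod.natCast_eq_zero_iff _ q).mpr h1
      push_cast at this; linear_combination this
    have e1' : ((r' : ZMod q) + a₁ * i') = 0 := by
      have := (ZMod.natCast_eq_zero_iff _ q).mpr h1'
      push_cast at this; linear_combination this
    have e2 : ((A : ZMod q) - a₂ * i) = 0 := by
      have := (ZMod.natCast_eq_zero_iff _ q).mpr h2
      rw [Nat.cast_sub hle] at this
      push_cast at this; linear_combination this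
    have e2' : ((A : ZMod q) - a₂ * i') = 0 := by
      have := (ZMod.natCast_eq_zero_iff _ q).mpr h2'
      rw [Nat.cast_sub hle'] at this
      push_cast at this; linear_combination this
    have hgcd := Nat.gcd_eq_gcd_ab a₁ a₂
    rw [hco] at hgcd
    have hbez : (1 : ZMod q) = (a₁ : ZMod q) * ((Nat.gcdA a₁ a₂ : ℤ) : ZMod q)
        + (a₂ : ZMod q) * ((Nat.gcdB a₁ a₂ : ℤ) : ZMod q) := by
      have := congrArg (fun z : ℤ => ((z : ℤ) : ZMod q)) hgcd
      push_cast at this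
      simpa using this
    linear_combination ((Nat.gcdA a₁ a₂ : ℤ) : ZMod q) * (e1 - e1')
      + ((Nat.gcdB a₁ a₂ : ℤ) : ZMod q) * (e2' - e2)
      + ((i : ZMod q) - (i' : ZMod q)) * hbez
  set T : ℕ → ℕ := fun q => if h : ∃ i, i ≤ K ∧ Bad q i then h.choose else 0 with hT_def
  have hT : ∀ q : ℕ, q.Prime → ∀ i, i ≤ K → Bad q i → (i : ZMod q) = ((T q : ℕ) : ZMod q) := by
    intro q hq i hi hbad
    have hex : ∃ i, i ≤ K ∧ Bad q i := ⟨i, hi, hbad⟩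
    have hTq : T q = hex.choose := by rw [hT_def]; simp [dif_pos hex]
    obtain ⟨hc1, hc2⟩ := hex.choose_spec
    rw [hTq]
    exact key q hq i _ hi hc1 hbad hc2
  -- apply the sieve
  have hK16 : 2 ^ (l / 8) * 2 ^ (l / 2) ≤ K := by
    have hlK : 2 ^ (l / 8) * 2 ^ (l / 2) * (2 * a₁ * a₂) ≤ n := by
      have e1 : 2 * a₁ * a₂ ≤ 2 ^ (2 * a₁ * a₂) := (Nat.lt_two_pow_self).le
      have e2 : 2 ^ (l / 8) * 2 ^ (l / 2) * (2 * a₁ * a₂)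
          ≤ 2 ^ (l / 8 + l / 2 + 2 * a₁ * a₂) := by
        rw [pow_add, pow_add]
        exact Nat.mul_le_mul_left _ e1
      have e3 : l / 8 + l / 2 + 2 * a₁ * a₂ ≤ l := by
        have hx : 8 * a₁ * a₂ = 4 * (2 * a₁ * a₂) := by ring
        omega
      exact e2.trans ((Nat.pow_le_pow_right (by norm_num) e3).trans h2l)
    rw [hK_def]
    exact Nat.le_div_iff_mul_le (by positivity) |>.mpr hlK
  obtain ⟨i, hiK, havoid⟩ := sieve_avoid n K hn0 T (hl_def ▸ hllarge) (hl_def ▸ hK16)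
  refine ⟨A - a₂ * i, r' + a₁ * i, ?_, ?_⟩
  · have hle : a₂ * i ≤ A := le_trans (Nat.mul_le_mul_left a₂ hiK) hKA
    zify [hle]
    have hAz : (a₁ : ℤ) * A + a₂ * r' = n := by exact_mod_cast hA
    ring_nf
    ring_nf at hAz
    linarith [hAz]
  · by_contra hg
    set g := Nat.gcd (A - a₂ * i) (r' + a₁ * i) with hg_def
    have hgpos : g ≠ 0 := by
      have : r' + a₁ * i ≠ 0 := by omega
      simp [hg_def, Nat.gcd_eq_zero_iff]
      omega
    have hq : (g.minFac).Prime := Nat.minFac_prime hg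
    set q := g.minFac with hq_def
    have qx₁ : q ∣ A - a₂ * i := (Nat.minFac_dvd g).trans (Nat.gcd_dvd_left _ _)
    have qx₂ : q ∣ r' + a₁ * i := (Nat.minFac_dvd g).trans (Nat.gcd_dvd_right _ _)
    have hle : a₂ * i ≤ A := le_trans (Nat.mul_le_mul_left a₂ hiK) hKA
    have qn : q ∣ n := by
      have : a₁ * (A - a₂ * i) + a₂ * (r' + a₁ * i) = n := by
        zify [hle]
        have hAz : (a₁ : ℤ) * A + a₂ * r' = n := by exact_mod_cast hA
        ring_nf
        ring_nf at hAz
        linarith [hAz]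
      rw [← this]
      exact dvd_add (qx₁.mul_left a₁) (qx₂.mul_left a₂)
    have hbad : Bad q i := ⟨qx₂, qx₁⟩
    exact havoid q hq qn (hT q hq i hiK hbad)


/-- Let `a₁ > 2` be a fixed integer. Then there exists `c₁ > 0` (depending
only on `a₁`) such that for every real `M` there is an integer `a₂ > M` with
`gcd (a₁, a₂) = 1`, `a₂ > a₁` and `G_{a₁,a₂} > c₁ · a₂ · log a₂`. -/
theorem coprimeFrobenius_limsup_lower_bound (a₁ : ℕ) (h₁ : 2 < a₁) :
    ∃ c₁ : ℝ, 0 < c₁ ∧ ∀ M : ℝ, ∃ a₂ : ℕ, (a₂ : ℝ) > M ∧ Nat.gcd a₁ a₂ = 1 ∧ a₁ < a₂ ∧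
      (coprimeFrobenius a₁ a₂ : ℝ) > c₁ * a₂ * Real.log a₂ := by
  classical
  have ha₁3 : 3 ≤ a₁ := h₁
  refine ⟨(8 * (a₁ : ℝ))⁻¹, by positivity, ?_⟩
  intro M
  set T : ℕ := ⌈M⌉₊ + 2 with hT_def
  have hT2 : 2 ≤ T := by omega
  set Q : Finset ℕ := (Finset.range (T + 1)).image (fun t => Nat.minFac (a₁ * (t + 1) - 1))
    with hQ_def
  have hv2 : ∀ t : ℕ, 2 ≤ a₁ * (t + 1) - 1 := by
    intro t
    have : a₁ ≤ a₁ * (t + 1) := Nat.le_mul_of_pos_right a₁ (by omega)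
    omega
  have hQp : ∀ q ∈ Q, q.Prime := by
    intro q hq
    rw [hQ_def, Finset.mem_image] at hq
    obtain ⟨t, _, rfl⟩ := hq
    exact Nat.minFac_prime (by have := hv2 t; omega)
  set P : ℕ := ∏ q ∈ Q, q with hP_def
  have hPpos : 0 < P := Finset.prod_pos (fun q hq => (hQp q hq).pos)
  have hQnda₁ : ∀ q ∈ Q, ¬ (q ∣ a₁) := by
    intro q hq hdvd
    rw [hQ_def, Finset.mem_image] at hq
    obtain ⟨t, _, rfl⟩ := hq
    have hvne : a₁ * (t + 1) - 1 ≠ 1 := by have := hv2 t; omega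
    have h1 : (a₁ * (t + 1) - 1).minFac ∣ a₁ * (t + 1) - 1 := Nat.minFac_dvd _
    have h2 : (a₁ * (t + 1) - 1).minFac ∣ a₁ * (t + 1) := hdvd.mul_right (t + 1)
    have h3 : (a₁ * (t + 1) - 1).minFac ∣ a₁ * (t + 1) - (a₁ * (t + 1) - 1) :=
      Nat.dvd_sub h2 h1
    have h4 : a₁ * (t + 1) - (a₁ * (t + 1) - 1) = 1 := by have := hv2 t; omega
    rw [h4] at h3
    have h5 := (Nat.minFac_prime hvne).two_le
    have h6 := Nat.le_of_dvd one_pos h3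
    omega
  have hcop : Nat.Coprime a₁ P := by
    rw [hP_def]
    apply Nat.Coprime.prod_right
    intro q hq
    exact ((Nat.Prime.coprime_iff_not_dvd (hQp q hq)).mpr (hQnda₁ q hq)).symm
  set a₂ : ℕ := 1 + a₁ * P * T with ha₂_def
  have ha₂1 : a₂ % a₁ = 1 % a₁ := by
    rw [ha₂_def, show 1 + a₁ * P * T = 1 + a₁ * (P * T) by ring]
    exact Nat.add_mul_mod_self_left 1 a₁ (P * T)
  have hgcd : Nat.gcd a₁ a₂ = 1 := by
    have h1 : Nat.gcd a₁ a₂ = Nat.gcd a₁ 1 := by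
      rw [ha₂_def, show 1 + a₁ * P * T = 1 + (P * T) * a₁ by ring]
      exact Nat.gcd_add_mul_right_right a₁ 1 (P * T)
    simpa using h1
  have haP : 1 ≤ a₁ * P := Nat.one_le_iff_ne_zero.mpr (by positivity)
  have ha₂big : T + 1 ≤ a₂ := by
    have h2 : 1 * T ≤ a₁ * P * T := Nat.mul_le_mul_right T haP
    omega
  have ha₁a₂ : a₁ < a₂ := by
    have h2 : a₁ * 1 * 2 ≤ a₁ * P * T := Nat.mul_le_mul (Nat.mul_le_mul_left a₁ hPpos) hT2
    omega
  -- construct the bad number n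
  obtain ⟨k, hk1, hk2⟩ := Nat.chineseRemainder hcop (a₁ - 1) 0
  set m : ℕ := a₁ * P with hm_def
  have hmpos : 0 < m := by positivity
  set W : ℕ := a₂ * (a₁ * (T + 1) - 1) with hW_def
  set n : ℕ := k % m + m * (W / m + 1) with hn_def
  have hnk : n ≡ k [MOD m] := by
    have h1 : (k % m + m * (W / m + 1)) % m = k % m % m := Nat.add_mul_mod_self_left _ _ _
    rw [hn_def, Nat.ModEq, h1, Nat.mod_mod_of_dvd k dvd_rfl]
  have hna₁ : n % a₁ = a₁ - 1 := by
    have h1 : n ≡ a₁ - 1 [MOD a₁] :=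
      ((hnk.of_dvd (Dvd.intro P rfl)).trans (hk1.of_dvd dvd_rfl))
    have h2 : n % a₁ = (a₁ - 1) % a₁ := h1
    rw [Nat.mod_eq_of_lt (show a₁ - 1 < a₁ by omega)] at h2
    exact h2
  have hnP : P ∣ n := by
    have h1 : n ≡ 0 [MOD P] := (hnk.of_dvd (Dvd.intro_left a₁ rfl)).trans hk2
    exact (Nat.modEq_zero_iff_dvd).mp h1
  have hWn : W < n := by
    have h1 := Nat.div_add_mod W m
    have h2 : W % m < m := Nat.mod_lt _ hmpos
    rw [hn_def]
    have h3 : m * (W / m + 1) = m * (W / m) + m := by ring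
    omega
  have hnW : n < W + a₁ * a₂ := by
    have h1 := Nat.div_add_mod W m
    have h2 : k % m < m := Nat.mod_lt _ hmpos
    have h3 : 2 * m ≤ a₁ * a₂ := by
      rw [hm_def, ha₂_def]
      have h6 : 2 ≤ a₁ * T := le_trans (by omega) (Nat.mul_le_mul ha₁3 hT2)
      have h7 : 2 * (a₁ * P) ≤ (a₁ * T) * (a₁ * P) := Nat.mul_le_mul_right (a₁ * P) h6
      calc 2 * (a₁ * P) ≤ (a₁ * T) * (a₁ * P) := h7
        _ = a₁ * (a₁ * P * T) := by ring
        _ ≤ a₁ + a₁ * (a₁ * P * T) := Nat.le_add_left _ _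
        _ = a₁ * (1 + a₁ * P * T) := by ring
    have h5 : m * (W / m + 1) = m * (W / m) + m := by ring
    omega
  -- n is not representable with coprime coefficients
  have nonrep : ∀ x₁ x₂ : ℕ, a₁ * x₁ + a₂ * x₂ = n → Nat.gcd x₁ x₂ ≠ 1 := by
    intro x₁ x₂ heq _hg
    rcases Nat.eq_zero_or_pos x₂ with h0 | hx₂pos
    · subst h0
      have : a₁ ∣ n := ⟨x₁, by omega⟩
      rw [Nat.dvd_iff_mod_eq_zero] at this
      omega
    · -- x₂ ≡ -1 mod a₁
      have hx₂mod : x₂ % a₁ = a₁ - 1 := by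
        have h1 : (a₂ * x₂) % a₁ = (1 * x₂) % a₁ :=
          Nat.ModEq.mul_right x₂ (ha₂1 : a₂ ≡ 1 [MOD a₁])
        have h2 : n % a₁ = (a₂ * x₂) % a₁ := by
          rw [← heq, Nat.mul_add_mod]
        rw [h1, one_mul] at h2
        rw [← h2, hna₁]
      set t : ℕ := x₂ / a₁ with ht_def
      have hx₂eq : x₂ = a₁ * (t + 1) - 1 := by
        have h5 := Nat.div_add_mod x₂ a₁
        rw [← ht_def] at h5
        have h4 : a₁ * (t + 1) = a₁ * t + a₁ := by ring
        omega
      have hx₂lt : x₂ < a₁ * (T + 2) - 1 := by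
        have h1 : a₂ * x₂ ≤ n := by omega
        have h2 : n < a₂ * (a₁ * (T + 2) - 1) := by
          have h3 : a₁ * (T + 2) - 1 = (a₁ * (T + 1) - 1) + a₁ := by
            have h4 : a₁ * (T + 2) = a₁ * (T + 1) + a₁ := by ring
            have := hv2 T
            omega
          calc n < W + a₁ * a₂ := hnW
            _ = a₂ * ((a₁ * (T + 1) - 1) + a₁) := by rw [hW_def]; ring
            _ = a₂ * (a₁ * (T + 2) - 1) := by rw [h3]
        have h5 : a₂ * x₂ < a₂ * (a₁ * (T + 2) - 1) := lt_of_le_of_lt h1 h2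
        exact Nat.lt_of_mul_lt_mul_left h5
      have htT : t ≤ T := by
        have h1 : a₁ * (t + 1) < a₁ * (T + 2) := by omega
        have := Nat.lt_of_mul_lt_mul_left h1
        omega
      set q : ℕ := x₂.minFac with hq_def
      have hx₂2 : 2 ≤ x₂ := by have := hv2 t; omega
      have hqp : q.Prime := Nat.minFac_prime (by omega)
      have hqQ : q ∈ Q := by
        rw [hQ_def, Finset.mem_image]
        exact ⟨t, Finset.mem_range.mpr (by omega), by rw [← hx₂eq]⟩
      have hqP : q ∣ P := Finset.dvd_prod_of_mem _ hqQ
      have hqn : q ∣ n := hqP.trans hnP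
      have hqx₂ : q ∣ x₂ := Nat.minFac_dvd x₂
      have hqa₁x₁ : q ∣ a₁ * x₁ := by
        have h1 : q ∣ a₂ * x₂ := hqx₂.mul_left a₂
        have h2 : a₁ * x₁ = n - a₂ * x₂ := by omega
        rw [h2]
        exact Nat.dvd_sub hqn h1
      have hqx₁ : q ∣ x₁ := (hqp.dvd_mul.mp hqa₁x₁).resolve_left (hQnda₁ q hqQ)
      have hqg : q ∣ Nat.gcd x₁ x₂ := Nat.dvd_gcd hqx₁ hqx₂
      rw [_hg] at hqg
      have := Nat.le_of_dvd one_pos hqg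
      have := hqp.two_le
      omega
  -- Frobenius set is nonempty
  have hSne : {N : ℕ | ∀ n' : ℕ, N < n' →
      ∃ x₁ x₂ : ℕ, a₁ * x₁ + a₂ * x₂ = n' ∧ Nat.gcd x₁ x₂ = 1}.Nonempty := by
    refine ⟨2 ^ (2 ^ 19 + 8 * a₁ * a₂), ?_⟩
    intro n' hn'
    exact exists_coprime_rep_s11 a₁ a₂ (by omega) (by omega) hgcd n' hn'
  have hnG : n ≤ coprimeFrobenius a₁ a₂ := by
    apply le_csInf hSne
    intro N hN
    by_contra hNn
    push_neg at hNn
    obtain ⟨x₁, x₂, heq, hg⟩ := hN n hNn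
    exact nonrep x₁ x₂ heq hg
  -- size estimates
  have hP4 : P ≤ 4 ^ (a₁ * (T + 1)) := by
    have h1 : P ≤ primorial (a₁ * (T + 1)) := by
      rw [hP_def]
      apply Finset.prod_le_prod_of_subset_of_one_le'
      · intro q hq
        rw [Finset.mem_filter]
        constructor
        · rw [Finset.mem_range]
          rw [hQ_def, Finset.mem_image] at hq
          obtain ⟨u, hu, rfl⟩ := hq
          rw [Finset.mem_range] at hu
          have h2 : Nat.minFac (a₁ * (u + 1) - 1) ≤ a₁ * (u + 1) - 1 :=
            Nat.minFac_le (by have := hv2 u; omega)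
          have h3 : a₁ * (u + 1) ≤ a₁ * (T + 1) := Nat.mul_le_mul_left a₁ (by omega)
          have h4 := hv2 u
          omega
        · exact hQp q hq
      · intro q hq _
        exact ((Finset.mem_filter.mp hq).2).pos
    exact h1.trans (primorial_le_4_pow _)
  -- pass to the reals
  have hT0 : 0 < T := by omega
  have ha₂0 : 0 < a₂ := by omega
  have hPT1 : 1 ≤ a₁ * P * T :=
    Nat.one_le_iff_ne_zero.mpr (Nat.mul_ne_zero (Nat.mul_ne_zero (by omega) hPpos.ne') hT0.ne')
  have ha₂le2 : a₂ ≤ 2 * (a₁ * P * T) := by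
    rw [ha₂_def, two_mul]
    exact Nat.add_le_add_right hPT1 _
  clear_value n W m a₂ P Q T
  have hPr : (0 : ℝ) < P := by exact_mod_cast hPpos
  have hTr : (0 : ℝ) < T := by exact_mod_cast hT0
  have ha₂r : (0 : ℝ) < a₂ := by exact_mod_cast ha₂0
  have ha₁r : (0 : ℝ) < a₁ := by positivity
  have ha₂M : (a₂ : ℝ) > M := by
    have h1 : (M : ℝ) ≤ (⌈M⌉₊ : ℕ) := Nat.le_ceil M
    have h2 : ((⌈M⌉₊ : ℕ) : ℝ) < a₂ := by
      have : ⌈M⌉₊ < a₂ := by omega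
      exact_mod_cast this
    linarith
  refine ⟨a₂, ha₂M, hgcd, ha₁a₂, ?_⟩
  have hlog : Real.log a₂ ≤ 6 * a₁ * T := by
    have ha₂le : (a₂ : ℝ) ≤ 2 * a₁ * P * T := by
      have h1 : a₂ ≤ 2 * (a₁ * P * T) := ha₂le2
      calc (a₂ : ℝ) ≤ (2 * (a₁ * P * T) : ℕ) := by exact_mod_cast h1
        _ = 2 * a₁ * P * T := by push_cast; ring
    have h2 : Real.log a₂ ≤ Real.log (2 * a₁ * P * T) :=
      Real.log_le_log (by exact_mod_cast ha₂0) ha₂le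
    have h3 : Real.log (2 * (a₁:ℝ) * P * T)
        = Real.log 2 + Real.log a₁ + Real.log P + Real.log T := by
      rw [Real.log_mul (by positivity) hTr.ne',
          Real.log_mul (by positivity) hPr.ne',
          Real.log_mul (by norm_num) ha₁r.ne']
    have hlog2 : Real.log 2 ≤ 1 := by
      have := Real.log_le_sub_one_of_pos (by norm_num : (0:ℝ) < 2)
      linarith
    have hloga₁ : Real.log a₁ ≤ a₁ := by
      have := Real.log_le_sub_one_of_pos ha₁r
      linarith
    have hlogT : Real.log T ≤ T := by
      have := Real.log_le_sub_one_of_pos hTr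
      linarith
    have hlogP : Real.log P ≤ (a₁ * (T + 1) : ℝ) * 2 := by
      have h4 : Real.log P ≤ Real.log ((4 : ℝ) ^ (a₁ * (T + 1) : ℕ)) := by
        apply Real.log_le_log hPr
        exact_mod_cast hP4
      rw [Real.log_pow] at h4
      have hlog4 : Real.log 4 ≤ 2 := by
        have h5 : (4 : ℝ) = 2 ^ 2 := by norm_num
        rw [h5, Real.log_pow]
        push_cast
        linarith
      calc Real.log P ≤ (a₁ * (T + 1) : ℕ) * Real.log 4 := h4
        _ ≤ (a₁ * (T + 1) : ℕ) * 2 := by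
            apply mul_le_mul_of_nonneg_left hlog4 (by positivity)
        _ = (a₁ * (T + 1) : ℝ) * 2 := by push_cast; ring
    have hT2' : (2 : ℝ) ≤ T := by exact_mod_cast hT2
    have ha₁3' : (3 : ℝ) ≤ a₁ := by exact_mod_cast ha₁3
    calc Real.log a₂ ≤ Real.log 2 + Real.log a₁ + Real.log P + Real.log T := by
          rw [← h3]; exact h2
      _ ≤ 1 + a₁ + (a₁ * (T + 1) : ℝ) * 2 + T := by linarith
      _ ≤ 6 * a₁ * T := by nlinarith
  have hWT : (a₂ : ℝ) * T ≤ W := by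
    have h1 : a₂ * T ≤ W := by
      rw [hW_def]
      apply Nat.mul_le_mul_left a₂
      have : 3 * (T + 1) ≤ a₁ * (T + 1) := Nat.mul_le_mul_right (T + 1) ha₁3
      omega
    exact_mod_cast h1
  have hWn' : (W : ℝ) < n := by exact_mod_cast hWn
  have hnG' : (n : ℝ) ≤ (coprimeFrobenius a₁ a₂ : ℝ) := by exact_mod_cast hnG
  calc (8 * (a₁ : ℝ))⁻¹ * a₂ * Real.log a₂ ≤ (8 * (a₁ : ℝ))⁻¹ * a₂ * (6 * a₁ * T) := by
        apply mul_le_mul_of_nonneg_left hlog (by positivity)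
    _ = (6 / 8) * (a₂ * T) := by field_simp
    _ ≤ (a₂ : ℝ) * T := by nlinarith [mul_pos ha₂r hTr]
    _ ≤ W := hWT
    _ < n := hWn'
    _ ≤ _ := hnG'
end

section
/- Let a be an odd integer greater than 2. Then G_{2,a} = 4a − 2. Equivalently: every integer n > 4a − 2 can be written as n = 2x_1 + a·x_2 with x_1, x_2 nonnegative integers and gcd(x_1, x_2) = 1, while 4a − 2 admits no such representation. -/
/-- Let `a` be an odd integer greater than `2`. Then `G_{2,a} = 4a − 2`;
equivalently, every integer `n > 4a − 2` can be written as `2x₁ + a·x₂` with `x₁, x₂`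
nonnegative integers and `gcd (x₁, x₂) = 1`, while `4a − 2` admits no such representation. -/
theorem coprimeFrobenius_two (a : ℕ) (ha : 2 < a) (hodd : Odd a) :
    coprimeFrobenius 2 a = 4 * a - 2 ∧
      (∀ n : ℕ, 4 * a - 2 < n →
        ∃ x₁ x₂ : ℕ, 2 * x₁ + a * x₂ = n ∧ Nat.gcd x₁ x₂ = 1) ∧
      ¬ ∃ x₁ x₂ : ℕ, 2 * x₁ + a * x₂ = 4 * a - 2 ∧ Nat.gcd x₁ x₂ = 1 := by
  obtain ⟨k, hk⟩ := hodd
  have hk1 : 1 ≤ k := by omega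
  have co2 : ∀ x : ℕ, x % 2 = 1 → Nat.Coprime x 2 := by
    intro x hx
    rcases (Nat.dvd_prime Nat.prime_two).mp (Nat.gcd_dvd_right x 2) with h | h
    · exact h
    · exfalso
      have h2 : (2 : ℕ) ∣ x := h ▸ Nat.gcd_dvd_left x 2
      omega
  -- every n > 4a-2 is representable
  have hrep : ∀ n : ℕ, 4 * a - 2 < n →
      ∃ x₁ x₂ : ℕ, 2 * x₁ + a * x₂ = n ∧ Nat.gcd x₁ x₂ = 1 := by
    intro n hn
    rcases Nat.even_or_odd n with ⟨m, hm⟩ | ⟨m, hm⟩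
    · -- n = 2m even
      rcases Nat.even_or_odd m with hme | hmo
      · -- m even, so m - a is odd; use x₂ = 2
        refine ⟨m - a, 2, by omega, ?_⟩
        refine co2 _ ?_
        obtain ⟨t, ht⟩ := hme
        omega
      · -- m odd, so m - 2a is odd; use x₂ = 4
        refine ⟨m - 2 * a, 4, by omega, ?_⟩
        have hodd1 : (m - 2 * a) % 2 = 1 := by
          obtain ⟨t, ht⟩ := hmo
          omega
        have : Nat.Coprime (m - 2 * a) (2 ^ 2) := (co2 _ hodd1).pow_right 2
        simpa using this
    · -- n odd; use x₂ = 1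
      refine ⟨m - k, 1, by omega, Nat.gcd_one_right _⟩
  -- 4a-2 is not representable
  have hno : ¬ ∃ x₁ x₂ : ℕ, 2 * x₁ + a * x₂ = 4 * a - 2 ∧ Nat.gcd x₁ x₂ = 1 := by
    rintro ⟨x₁, x₂, heq, hg⟩
    have hb : x₂ < 4 := by
      by_contra hx4
      push_neg at hx4
      have h1 : a * x₂ ≤ 4 * a - 2 := heq ▸ Nat.le_add_left _ _
      have h2 : a * 4 ≤ a * x₂ := Nat.mul_le_mul_left a hx4
      have h3 : a * 4 ≤ 4 * a - 2 := le_trans h2 h1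
      omega
    interval_cases x₂
    · simp at hg; omega
    · omega
    · -- x₂ = 2: x₁ = a - 1 = 2k, even, so gcd ≠ 1
      have hx1 : x₁ = 2 * k := by omega
      have h2 : (2 : ℕ) ∣ Nat.gcd x₁ 2 := Nat.dvd_gcd ⟨k, hx1⟩ dvd_rfl
      omega
    · omega
  refine ⟨?_, hrep, hno⟩
  have hmem : (4 * a - 2) ∈ {N : ℕ | ∀ n : ℕ, N < n →
      ∃ x₁ x₂ : ℕ, 2 * x₁ + a * x₂ = n ∧ Nat.gcd x₁ x₂ = 1} := hrep
  refine le_antisymm (Nat.sInf_le hmem) ?_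
  by_contra h
  push_neg at h
  have hmem' := Nat.sInf_mem ⟨_, hmem⟩
  exact hno (hmem' _ h)
end

section
/- Let 1 < a_1 < a_2 be integers with gcd(a_1, a_2) = 1, and let n be a positive integer such that ⌊n/(a_1·a_2)⌋ ≥ j(n), where j(n) is the Jacobsthal function of n. Then n can be written as n = a_1x_1 + a_2x_2 with x_1, x_2 nonnegative integers and gcd(x_1, x_2) = 1. -/
/-- The Jacobsthal function `j n`: the least positive integer `m` such that any `m` consecutive
integers contain at least one integer coprime to `n`. -/
noncomputable def jacobsthal (n : ℕ) : ℕ :=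
  sInf {m : ℕ | 0 < m ∧ ∀ x : ℤ, ∃ i : ℕ, 1 ≤ i ∧ i ≤ m ∧ Int.gcd (x + i) n = 1}

/-- Let `1 < a₁ < a₂` be coprime integers, and let `n` be a positive integer
with `⌊n / (a₁a₂)⌋ ≥ j(n)`, where `j` is the Jacobsthal function. Then `n = a₁x₁ + a₂x₂` for
some nonnegative integers `x₁, x₂` with `gcd (x₁, x₂) = 1`. -/
theorem coprime_representable_of_jacobsthal_le (a₁ a₂ : ℕ) (h₁ : 1 < a₁) (h₂ : a₁ < a₂)
    (hco : Nat.gcd a₁ a₂ = 1) (n : ℕ) (hn : 0 < n)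
    (hj : jacobsthal n ≤ n / (a₁ * a₂)) :
    ∃ x₁ x₂ : ℕ, a₁ * x₁ + a₂ * x₂ = n ∧ Nat.gcd x₁ x₂ = 1 := by
  have hnz : (n:ℤ) ≠ 0 := by exact_mod_cast hn.ne'
  -- the defining set of jacobsthal is nonempty
  have hne : {m : ℕ | 0 < m ∧ ∀ x : ℤ, ∃ i : ℕ, 1 ≤ i ∧ i ≤ m ∧ Int.gcd (x + i) n = 1}.Nonempty := by
    refine ⟨n, hn, fun x => ?_⟩
    have hr0 : 0 ≤ (-x) % (n:ℤ) := Int.emod_nonneg _ hnz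
    have hrn : (-x) % (n:ℤ) < n := Int.emod_lt_of_pos _ (by exact_mod_cast hn)
    refine ⟨((-x) % (n:ℤ)).toNat + 1, by omega, by omega, ?_⟩
    have hxi : x + (((-x) % (n:ℤ)).toNat + 1 : ℕ) = 1 + (n:ℤ) * (-((-x)/(n:ℤ))) := by
      push_cast [Int.toNat_of_nonneg hr0]
      rw [Int.emod_def]; ring
    rw [hxi]
    exact Int.isCoprime_iff_gcd_eq_one.mp ⟨1, (-x)/(n:ℤ), by ring⟩
  obtain ⟨hjpos, hjall⟩ := Nat.sInf_mem hne
  set m : ℕ := n / (a₁ * a₂) with hm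
  have hm1 : 1 ≤ m := le_trans hjpos hj
  have hmn : m * (a₁ * a₂) ≤ n := Nat.div_mul_le_self n (a₁ * a₂)
  -- choose Q with a₂ * Q ≡ n [MOD a₁], 0 ≤ Q < a₁
  haveI : NeZero a₁ := ⟨by omega⟩
  set Q : ℕ := ((a₂ : ZMod a₁)⁻¹ * (n : ZMod a₁)).val with hQ
  have hQlt : Q < a₁ := ZMod.val_lt _
  have hcop : Nat.Coprime a₂ a₁ := Nat.coprime_comm.mp hco
  have hmod : ((a₂ * Q : ℕ) : ZMod a₁) = ((n : ℕ) : ZMod a₁) := by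
    push_cast [hQ, ZMod.natCast_val, ZMod.cast_id]
    rw [← mul_assoc, ZMod.coe_mul_inv_eq_one a₂ hcop, one_mul]
  have hdvd : (a₁ : ℤ) ∣ (n : ℤ) - (a₂:ℤ) * (Q:ℤ) := by
    have := ((ZMod.natCast_eq_natCast_iff _ _ _).mp hmod).dvd
    push_cast at this
    exact this
  obtain ⟨P, hP⟩ := hdvd
  -- so (n:ℤ) = a₁ * P + a₂ * Q
  have hPn : (n:ℤ) = (a₁:ℤ) * P + (a₂:ℤ) * (Q:ℤ) := by linarith [hP]
  -- bound : a₂ * (m-1) < P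
  have hPbound : (a₂:ℤ) * ((m:ℤ) - 1) < P := by
    have h1 : (a₁:ℤ) * ((a₂:ℤ) * ((m:ℤ) - 1)) < (a₁:ℤ) * P := by
      have hmn' : ((m:ℤ)) * ((a₁:ℤ) * (a₂:ℤ)) ≤ (n:ℤ) := by exact_mod_cast hmn
      have hQ' : (Q:ℤ) < (a₁:ℤ) := by exact_mod_cast hQlt
      have ha2 : (0:ℤ) < a₂ := by exact_mod_cast (by omega : 0 < a₂)
      nlinarith [hPn]
    exact lt_of_mul_lt_mul_left h1 (by positivity)
  -- Bezout: a₁ * v - a₂ * u = 1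
  have hicop : IsCoprime (a₁:ℤ) (a₂:ℤ) := by
    rw [Int.isCoprime_iff_gcd_eq_one]
    exact_mod_cast hco
  obtain ⟨v, u', huv'⟩ := hicop
  set u : ℤ := -u' with hu
  have huv : (a₁:ℤ) * v - (a₂:ℤ) * u = 1 := by rw [hu]; linarith [huv']
  -- apply jacobsthal property
  obtain ⟨i, hi1, hij, hgcd⟩ := hjall (u * P + v * Q - 1)
  set t : ℤ := (i:ℤ) - 1 with ht
  have ht0 : 0 ≤ t := by simp [ht]; exact_mod_cast hi1
  have htm : t ≤ (m:ℤ) - 1 := by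
    have : (i:ℤ) ≤ m := by exact_mod_cast le_trans hij hj
    omega
  set y₁ : ℤ := P - (a₂:ℤ) * t with hy₁
  set y₂ : ℤ := (Q:ℤ) + (a₁:ℤ) * t with hy₂
  have hx₁ : 0 ≤ y₁ := by
    have : (a₂:ℤ) * t ≤ (a₂:ℤ) * ((m:ℤ) - 1) :=
      mul_le_mul_of_nonneg_left htm (by positivity)
    simp [hy₁]; linarith
  have hx₂ : 0 ≤ y₂ := by
    have h5 : (0:ℤ) ≤ (a₁:ℤ) * t := mul_nonneg (by positivity) ht0
    have h6 : (0:ℤ) ≤ (Q:ℤ) := Int.natCast_nonneg _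
    simp only [hy₂]; linarith
  have hsum : (a₁:ℤ) * y₁ + (a₂:ℤ) * y₂ = n := by rw [hy₁, hy₂, hPn]; ring
  have hlin : u * y₁ + v * y₂ = (u * P + v * Q - 1) + i := by
    rw [hy₁, hy₂, ht]; linear_combination ((i:ℤ) - 1) * huv
  refine ⟨y₁.toNat, y₂.toNat, ?_, ?_⟩
  · have : ((a₁ * y₁.toNat + a₂ * y₂.toNat : ℕ) : ℤ) = (n:ℤ) := by
      push_cast [Int.toNat_of_nonneg hx₁, Int.toNat_of_nonneg hx₂]
      exact hsum
    exact_mod_cast this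
  · set g : ℕ := Nat.gcd y₁.toNat y₂.toNat with hg
    have hg1 : (g:ℤ) ∣ y₁ := by
      rw [← Int.toNat_of_nonneg hx₁]
      exact_mod_cast Nat.gcd_dvd_left _ _
    have hg2 : (g:ℤ) ∣ y₂ := by
      rw [← Int.toNat_of_nonneg hx₂]
      exact_mod_cast Nat.gcd_dvd_right _ _
    have hgn : (g:ℤ) ∣ (n:ℤ) := by rw [← hsum]; exact dvd_add (Dvd.dvd.mul_left hg1 _) (Dvd.dvd.mul_left hg2 _)
    have hgy : (g:ℤ) ∣ (u * P + v * Q - 1) + i := by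
      rw [← hlin]; exact dvd_add (Dvd.dvd.mul_left hg1 _) (Dvd.dvd.mul_left hg2 _)
    have : (g:ℤ) ∣ (Int.gcd ((u * P + v * Q - 1) + i) n : ℤ) := Int.dvd_coe_gcd hgy hgn
    rw [hgcd] at this
    exact_mod_cast Int.eq_one_of_dvd_one (by positivity) this
end

section
/- Let a ∈ {6, 8, 12, 24} and let g be a nonnegative integer, and set b = a·g + (a − 1) (so b ≡ −1 (mod a); explicitly b = 6g+5, 8g+7, 12g+11, 24g+23 respectively). Then there is no prime p and nonnegative integers x, y such that p² ≤ a·b − a − b and p² = a·x + b·y. In particular π_{2,6,6g+5} = π_{2,8,8g+7} = π_{2,12,12g+11} = π_{2,24,24g+23} = 0. -/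
/-- For any prime `p`, either `p = 2`, `p = 3`, or `p ^ 2 ≡ 1 (mod 24)`. -/
lemma prime_sq_mod24 (p : ℕ) (hp : p.Prime) : p = 2 ∨ p = 3 ∨ p ^ 2 % 24 = 1 := by
  by_cases h2 : p = 2
  · exact Or.inl h2
  by_cases h3 : p = 3
  · exact Or.inr (Or.inl h3)
  right; right
  have hd2 : ¬ 2 ∣ p := fun h => by
    rcases (Nat.Prime.eq_one_or_self_of_dvd hp 2 h) with h' | h' <;> omega
  have hd3 : ¬ 3 ∣ p := fun h => by
    rcases (Nat.Prime.eq_one_or_self_of_dvd hp 3 h) with h' | h' <;> omega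
  have hm2 : p % 2 = 1 := by omega
  have hm3 : p % 3 = 1 ∨ p % 3 = 2 := by omega
  obtain ⟨r, hr⟩ : ∃ r, p % 24 = r := ⟨_, rfl⟩
  have hrlt : r < 24 := by omega
  have e : p ^ 2 % 24 = r ^ 2 % 24 := by rw [Nat.pow_mod, hr]
  have hr2 : r % 2 = 1 := by omega
  have hr3 : r % 3 = 1 ∨ r % 3 = 2 := by omega
  rw [e]
  interval_cases r <;> first | rfl | omega

lemma aux_no_rep (a g x y q t : ℕ) (ha : a = 6 ∨ a = 8 ∨ a = 12 ∨ a = 24)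
    (ht : t = g * y)
    (hq : q = 4 ∨ q = 9 ∨ q % 24 = 1)
    (hle : q ≤ a * (a * g + (a - 1)) - a - (a * g + (a - 1)))
    (heq : q = a * x + a * t + (a - 1) * y) : False := by
  have hy : q % 24 = 1 → a - 1 ≤ y := by
    intro h1
    rcases ha with rfl | rfl | rfl | rfl <;> omega
  have hgt : a - 1 ≤ y → g * (a - 1) ≤ t := fun h => ht ▸ Nat.mul_le_mul_left g h
  rcases hq with rfl | rfl | h1
  · rcases ha with rfl | rfl | rfl | rfl <;> omega
  · rcases ha with rfl | rfl | rfl | rfl <;> omega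
  · have h3 := hy h1
    have h2 := hgt h3
    rcases ha with rfl | rfl | rfl | rfl <;> omega

/-- Let `a ∈ {6, 8, 12, 24}`, let `g` be a nonnegative integer and set
`b = a·g + (a − 1)`. Then there is no prime `p` and nonnegative integers `x, y` with
`p² ≤ a·b − a − b` and `p² = a·x + b·y`; in particular
`π_{2,6,6g+5} = π_{2,8,8g+7} = π_{2,12,12g+11} = π_{2,24,24g+23} = 0`. -/
theorem no_prime_square_representation (a : ℕ) (ha : a = 6 ∨ a = 8 ∨ a = 12 ∨ a = 24)
    (g : ℕ) (b : ℕ) (hb : b = a * g + (a - 1)) :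
    ¬ ∃ (p x y : ℕ), p.Prime ∧ p ^ 2 ≤ a * b - a - b ∧ p ^ 2 = a * x + b * y := by
  rintro ⟨p, x, y, hp, hle, heq⟩
  have hq : p ^ 2 = 4 ∨ p ^ 2 = 9 ∨ p ^ 2 % 24 = 1 := by
    rcases prime_sq_mod24 p hp with rfl | rfl | h
    · left; norm_num
    · right; left; norm_num
    · right; right; exact h
  refine aux_no_rep a g x y (p ^ 2) (g * y) ha rfl hq ?_ ?_
  · rw [hb] at hle; exact hle
  · rw [heq, hb]; ring
end
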